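/- arXiv:1711.06554 — 5 statements merged into one kernel-verified Lean document; each statement's English description precedes it below -/
import Mathlib

section
/- Let f : [0,1] → [0,1] be piecewise expanding with expansion constant σ > 2 on intervals I_1,…,I_m. Then for every nondegenerate interval I ⊆ [0,1] there exist an integer i ≥ 1 and an open subinterval W ⊆ I such that f^i restricted to W is a diffeomorphism onto the interior of some I_j. -/
open Set MeasureTheory Filter Function
open scoped ENNReal

/-- A piecewise expanding map of `[0,1]` on `m` intervals, with partition points
`0 = a 0 < a 1 < ⋯ < a m = 1`, expansion constant `σ`, and `C¹` branches with
Lipschitz derivative and `|f'| ≥ σ` on each piece. -/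
structure PWE (m : ℕ) where
  toFun : ℝ → ℝ
  a : Fin (m + 1) → ℝ
  σ : ℝ
  hm : 0 < m
  hσ : 1 < σ
  ha : StrictMono a
  ha0 : a 0 = 0
  ha1 : a (Fin.last m) = 1
  measurable : Measurable toFun
  mapsTo : MapsTo toFun (Icc 0 1) (Icc 0 1)
  branch : Fin m → ℝ → ℝ
  branch_smooth : ∀ i, ContDiff ℝ 1 (branch i)
  branch_lip : ∀ i, ∃ L : NNReal,
    LipschitzOnWith L (deriv (branch i)) (Icc (a i.castSucc) (a i.succ))
  branch_expand : ∀ i, ∀ x ∈ Icc (a i.castSucc) (a i.succ), σ ≤ |deriv (branch i) x|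
  branch_eq : ∀ i, EqOn toFun (branch i) (Ioo (a i.castSucc) (a i.succ))
  branch_cover : ∀ x ∈ Icc (0 : ℝ) 1,
    ∃ i, x ∈ Icc (a i.castSucc) (a i.succ) ∧ toFun x = branch i x

namespace PWE

/-- the set `D` of interior partition points (discontinuity set) -/
def D {m : ℕ} (F : PWE m) : Set ℝ :=
  {x | ∃ i : Fin (m + 1), i ≠ 0 ∧ i ≠ Fin.last m ∧ x = F.a i}

/-- the set `B` of all endpoints of the partition intervals -/
def B {m : ℕ} (F : PWE m) : Set ℝ := Set.range F.a

end PWE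

/-- the (closed) support of a measure on `ℝ`: points all of whose neighbourhoods
have positive measure. -/
def msupport (μ : Measure ℝ) : Set ℝ := {x | ∀ U ∈ nhds x, 0 < μ U}

/-- `μ` is an ergodic absolutely continuous invariant probability measure of `F`. -/
def IsErgodicAcip {m : ℕ} (F : PWE m) (μ : Measure ℝ) : Prop :=
  IsProbabilityMeasure μ ∧ μ ≪ volume ∧ Ergodic F.toFun μ

/-- periodic point -/
def IsPeriodicPoint {m : ℕ} (F : PWE m) (x : ℝ) : Prop :=
  ∃ n : ℕ, 0 < n ∧ F.toFun^[n] x = x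

/-- a one-sided orbit segment `x 0, …, x n`: each `x k` is the one-sided limit
`f^k((x 0)^+)` for all `k ≤ n`, or `f^k((x 0)^-)` for all `k ≤ n`. -/
def OrbitSeg {m : ℕ} (F : PWE m) (x : ℕ → ℝ) (n : ℕ) : Prop :=
  (∀ k ≤ n, Tendsto (F.toFun^[k]) (nhdsWithin (x 0) (Ioi (x 0))) (nhds (x k))) ∨
  (∀ k ≤ n, Tendsto (F.toFun^[k]) (nhdsWithin (x 0) (Iio (x 0))) (nhds (x k)))

/-- a boundary segment of an ergodic acip `μ`. -/
def BoundarySeg {m : ℕ} (F : PWE m) (μ : Measure ℝ) (x : ℕ → ℝ) (n : ℕ) : Prop :=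
  0 < n ∧ OrbitSeg F x n ∧
  x 0 ∈ F.D ∩ interior (msupport μ) ∧
  (∀ i, 1 ≤ i → i < n → x i ∈ frontier (msupport μ)) ∧
  ((∃ k, 1 ≤ k ∧ k < n ∧ x n = x k) ∨ x n ∈ interior (msupport μ))

/-- exactness of `(f, μ)`: the tail σ-algebra is `μ`-trivial. -/
def IsExactMap (f : ℝ → ℝ) (μ : Measure ℝ) : Prop :=
  ∀ s : Set ℝ, (∀ n : ℕ, ∃ t : Set ℝ, MeasurableSet t ∧ s = f^[n] ⁻¹' t) →
    μ s = 0 ∨ μ s = 1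

/-- `μ = (1/k) ∑_{j<k} f_*^j ν` with each `(f^k, f_*^j ν)` exact. -/
def MixingDecomp {m : ℕ} (F : PWE m) (μ : Measure ℝ) (k : ℕ) (ν : Measure ℝ) : Prop :=
  0 < k ∧ IsProbabilityMeasure ν ∧ ν ≪ volume ∧
  μ = (k : ℝ≥0∞)⁻¹ • ∑ j ∈ Finset.range k, ν.map (F.toFun^[j]) ∧
  ∀ j < k, IsExactMap (F.toFun^[k]) (ν.map (F.toFun^[j]))

/-- `μ` has mixing period `k`. -/
def HasMixingPeriod {m : ℕ} (F : PWE m) (μ : Measure ℝ) (k : ℕ) : Prop :=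
  ∃ ν : Measure ℝ, MixingDecomp F μ k ν

/-- the separation condition (Definition 4 of the paper). -/
def SeparationCondition {m : ℕ} (F : PWE m) : Prop :=
  (∀ μ ν : Measure ℝ, IsErgodicAcip F μ → IsErgodicAcip F ν → μ ≠ ν →
      msupport μ ∩ msupport ν = ∅) ∧
  (∀ μ : Measure ℝ, ∀ k : ℕ, ∀ ν : Measure ℝ, IsErgodicAcip F μ → MixingDecomp F μ k ν →
      ∀ j j', j < k → j' < k → j ≠ j' →
        msupport (ν.map (F.toFun^[j])) ∩ msupport (ν.map (F.toFun^[j'])) = ∅) ∧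
  (∀ μ : Measure ℝ, ∀ k : ℕ, IsErgodicAcip F μ → HasMixingPeriod F μ k →
      {x : ℝ | ∃ j < k, F.toFun^[j] x ∈ F.D} ∩ frontier (msupport μ) = ∅) ∧
  (∀ μ : Measure ℝ, IsErgodicAcip F μ →
      ∀ x ∈ Ioo (0 : ℝ) 1 ∩ frontier (msupport μ), ¬ IsPeriodicPoint F x)

/-- the sets `ω_n(I)`: `ω_0(I) = I`, `ω_{n+1}(I) = f(ω_n(I) \ D)`. -/
def omegaSet {m : ℕ} (F : PWE m) (I : Set ℝ) : ℕ → Set ℝ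
  | 0 => I
  | n + 1 => F.toFun '' (omegaSet F I n \ F.D)

/-- `Ω_n(I) = ω_0(I) ∪ ⋯ ∪ ω_n(I)` -/
def OmegaN {m : ℕ} (F : PWE m) (I : Set ℝ) (n : ℕ) : Set ℝ :=
  ⋃ k ∈ Finset.range (n + 1), omegaSet F I k

/-- `Ω(I) = ⋃_n ω_n(I)` -/
def OmegaInf {m : ℕ} (F : PWE m) (I : Set ℝ) : Set ℝ := ⋃ n : ℕ, omegaSet F I n

/-- `ℓ(F)`: the minimal length of the partition intervals. -/
noncomputable def ell {m : ℕ} (F : PWE m) : ℝ :=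
  ⨅ j : Fin m, (F.a j.succ - F.a j.castSucc)

/-- sup norm on a set -/
noncomputable def supAbsOn (h : ℝ → ℝ) (s : Set ℝ) : ℝ := sSup ((fun x => |h x|) '' s)

/-- Lipschitz constant on a set -/
noncomputable def lipConstOn (h : ℝ → ℝ) (s : Set ℝ) : ℝ :=
  sSup {c : ℝ | ∃ x ∈ s, ∃ y ∈ s, x ≠ y ∧ c = |h x - h y| / |x - y|}

/-- Lipschitz norm on a set -/
noncomputable def lipNormOn (h : ℝ → ℝ) (s : Set ℝ) : ℝ := supAbsOn h s + lipConstOn h s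

/-- the affine map `η_i` identifying `I_i(f)` with `I_i(g)` -/
noncomputable def etaMap {m : ℕ} (f g : PWE m) (i : Fin m) (x : ℝ) : ℝ :=
  g.a i.castSucc + (x - f.a i.castSucc) *
    ((g.a i.succ - g.a i.castSucc) / (f.a i.succ - f.a i.castSucc))

/-- the metric `d` on the space `X_m` of piecewise expanding maps on `m` intervals. -/
noncomputable def dXm {m : ℕ} (f g : PWE m) : ℝ :=
  (⨆ i : Fin (m + 1), |f.a i - g.a i|) +
  (⨆ i : Fin m, supAbsOn (fun x => f.branch i x - g.branch i (etaMap f g i x))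
      (Icc (f.a i.castSucc) (f.a i.succ))) +
  (⨆ i : Fin m,
    (lipNormOn (fun x => deriv (f.branch i) x - deriv (g.branch i) (etaMap f g i x))
        (Icc (f.a i.castSucc) (f.a i.succ)) +
     lipNormOn (fun x => deriv (g.branch i) x - deriv (f.branch i) (etaMap g f i x))
        (Icc (g.a i.castSucc) (g.a i.succ))))

/-- regular point: orbit avoids the discontinuity set -/
def RegularPt {m : ℕ} (F : PWE m) (x : ℝ) : Prop := ∀ k : ℕ, F.toFun^[k] x ∉ F.D

/-- `x` leads to `y` under `f` -/
def Leads (f : ℝ → ℝ) (x y : ℝ) : Prop := ∀ V ∈ nhds x, ∃ n : ℕ, y ∈ f^[n] '' V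

/-- `x` and `y` are heteroclinically related under `f` -/
def HeteroRelated (f : ℝ → ℝ) (x y : ℝ) : Prop := Leads f x y ∧ Leads f y x

/-- a finite union of (nonempty) closed intervals -/
def IsFinUnionClosedIntervals (s : Set ℝ) : Prop :=
  ∃ n : ℕ, ∃ c d : Fin n → ℝ, (∀ i, c i ≤ d i) ∧ s = ⋃ i, Icc (c i) (d i)

/-- basin of attraction of `μ` -/
def Basin {m : ℕ} (F : PWE m) (μ : Measure ℝ) : Set ℝ :=
  {x | ∀ φ : ℝ → ℝ, Continuous φ →
    Tendsto (fun n : ℕ => (1 / (n : ℝ)) * ∑ k ∈ Finset.range n, φ (F.toFun^[k] x))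
      atTop (nhds (∫ y, φ y ∂μ))}

/-- `μ` has a density of bounded variation with respect to Lebesgue measure -/
def HasBVDensity (μ : Measure ℝ) : Prop :=
  ∃ ρ : ℝ → ℝ, BoundedVariationOn ρ (Icc 0 1) ∧
    μ = volume.withDensity (fun x => ENNReal.ofReal (ρ x))


/-! ### Auxiliary lemmas for `stmt0` -/

private lemma aux_image_Ioo {g : ℝ → ℝ} (hg : Continuous g) {u v : ℝ} (huv : u < v)
    (hm : StrictMonoOn g (Icc u v)) : g '' Ioo u v = Ioo (g u) (g v) := by
  apply Subset.antisymm
  · rintro _ ⟨x, hx, rfl⟩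
    exact ⟨hm (left_mem_Icc.2 huv.le) ⟨hx.1.le, hx.2.le⟩ hx.1,
           hm ⟨hx.1.le, hx.2.le⟩ (right_mem_Icc.2 huv.le) hx.2⟩
  · exact intermediate_value_Ioo huv.le hg.continuousOn

private lemma aux_image_Ioo_anti {g : ℝ → ℝ} (hg : Continuous g) {u v : ℝ} (huv : u < v)
    (hm : StrictAntiOn g (Icc u v)) : g '' Ioo u v = Ioo (g v) (g u) := by
  apply Subset.antisymm
  · rintro _ ⟨x, hx, rfl⟩
    exact ⟨hm ⟨hx.1.le, hx.2.le⟩ (right_mem_Icc.2 huv.le) hx.2,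
           hm (left_mem_Icc.2 huv.le) ⟨hx.1.le, hx.2.le⟩ hx.1⟩
  · exact intermediate_value_Ioo' huv.le hg.continuousOn

private lemma aux_pullback_mono {g : ℝ → ℝ} (hg : Continuous g) {c d u' v' : ℝ} (hcd : c < d)
    (hm : StrictMonoOn g (Icc c d)) (h1 : g c ≤ u') (h3 : u' < v') (h2 : v' ≤ g d) :
    ∃ u v, c ≤ u ∧ u < v ∧ v ≤ d ∧ g u = u' ∧ g v = v' := by
  obtain ⟨u, hu, hgu⟩ := intermediate_value_Icc hcd.le hg.continuousOn ⟨h1, h3.le.trans h2⟩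
  obtain ⟨v, hv, hgv⟩ := intermediate_value_Icc hcd.le hg.continuousOn ⟨h1.trans h3.le, h2⟩
  refine ⟨u, v, hu.1, ?_, hv.2, hgu, hgv⟩
  by_contra h
  push_neg at h
  have : g v ≤ g u := hm.monotoneOn hv hu h
  rw [hgu, hgv] at this
  exact absurd this (not_le.2 h3)

private lemma aux_pullback_anti {g : ℝ → ℝ} (hg : Continuous g) {c d u' v' : ℝ} (hcd : c < d)
    (hm : StrictAntiOn g (Icc c d)) (h1 : g d ≤ u') (h3 : u' < v') (h2 : v' ≤ g c) :
    ∃ u v, c ≤ u ∧ u < v ∧ v ≤ d ∧ g u = v' ∧ g v = u' := by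
  obtain ⟨u, hu, hgu⟩ := intermediate_value_Icc' hcd.le hg.continuousOn ⟨h1.trans h3.le, h2⟩
  obtain ⟨v, hv, hgv⟩ := intermediate_value_Icc' hcd.le hg.continuousOn ⟨h1, h3.le.trans h2⟩
  refine ⟨u, v, hu.1, ?_, hv.2, hgu, hgv⟩
  by_contra h
  push_neg at h
  have : g u ≤ g v := hm.antitoneOn hv hu h
  rw [hgu, hgv] at this
  exact absurd this (not_le.2 h3)

namespace PWE

variable {m : ℕ}

private lemma a_lt (F : PWE m) (i : Fin m) : F.a i.castSucc < F.a i.succ :=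
  F.ha Fin.castSucc_lt_succ

private lemma a_mem (F : PWE m) (p : Fin (m + 1)) : F.a p ∈ Icc (0 : ℝ) 1 :=
  ⟨F.ha0 ▸ F.ha.monotone (Fin.zero_le p), F.ha1 ▸ F.ha.monotone (Fin.le_last p)⟩

private lemma deriv_branch_ne (F : PWE m) (i : Fin m) {x : ℝ}
    (hx : x ∈ Icc (F.a i.castSucc) (F.a i.succ)) : deriv (F.branch i) x ≠ 0 := by
  intro h
  have h2 := F.branch_expand i x hx
  rw [h, abs_zero] at h2
  linarith [F.hσ]

private lemma branch_monoOrAnti (F : PWE m) (i : Fin m) :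
    StrictMonoOn (F.branch i) (Icc (F.a i.castSucc) (F.a i.succ)) ∨
      StrictAntiOn (F.branch i) (Icc (F.a i.castSucc) (F.a i.succ)) := by
  have hc : Continuous (deriv (F.branch i)) := (F.branch_smooth i).continuous_deriv le_rfl
  by_cases hpos : ∀ x ∈ Icc (F.a i.castSucc) (F.a i.succ), 0 < deriv (F.branch i) x
  · exact Or.inl <| strictMonoOn_of_deriv_pos (convex_Icc _ _)
      (F.branch_smooth i).continuous.continuousOn
      (fun x hx => hpos x (interior_subset hx))
  · push_neg at hpos
    obtain ⟨x₀, hx₀, hle⟩ := hpos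
    have hneg₀ : deriv (F.branch i) x₀ < 0 := lt_of_le_of_ne hle (F.deriv_branch_ne i hx₀)
    have hneg : ∀ x ∈ Icc (F.a i.castSucc) (F.a i.succ), deriv (F.branch i) x < 0 := by
      intro y hy
      rcases lt_or_ge (deriv (F.branch i) y) 0 with h | h
      · exact h
      exfalso
      have hpy : 0 < deriv (F.branch i) y :=
        lt_of_le_of_ne h (Ne.symm (F.deriv_branch_ne i hy))
      have hsub : uIcc x₀ y ⊆ Icc (F.a i.castSucc) (F.a i.succ) := uIcc_subset_Icc hx₀ hy
      have h0 : (0 : ℝ) ∈ uIcc (deriv (F.branch i) x₀) (deriv (F.branch i) y) := by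
        rw [mem_uIcc]
        exact Or.inl ⟨hneg₀.le, hpy.le⟩
      obtain ⟨z, hz, hz0⟩ := intermediate_value_uIcc hc.continuousOn h0
      exact F.deriv_branch_ne i (hsub hz) hz0
    exact Or.inr <| strictAntiOn_of_deriv_neg (convex_Icc _ _)
      (F.branch_smooth i).continuous.continuousOn
      (fun x hx => hneg x (interior_subset hx))

private lemma branch_mapsTo (F : PWE m) (i : Fin m) :
    MapsTo (F.branch i) (Icc (F.a i.castSucc) (F.a i.succ)) (Icc (0 : ℝ) 1) := by
  have hsub : Ioo (F.a i.castSucc) (F.a i.succ) ⊆ Icc (0 : ℝ) 1 :=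
    fun x hx => ⟨(F.a_mem i.castSucc).1.trans hx.1.le, hx.2.le.trans (F.a_mem i.succ).2⟩
  have h1 : MapsTo (F.branch i) (Ioo (F.a i.castSucc) (F.a i.succ)) (Icc (0 : ℝ) 1) := by
    intro x hx
    rw [← F.branch_eq i hx]
    exact F.mapsTo (hsub hx)
  have h2 := h1.closure (F.branch_smooth i).continuous
  rw [closure_Ioo (F.a_lt i).ne, IsClosed.closure_eq isClosed_Icc] at h2
  exact h2

private lemma branch_expand_image (F : PWE m) (i : Fin m) {u v : ℝ}
    (hu : F.a i.castSucc ≤ u) (huv : u < v) (hv : v ≤ F.a i.succ) :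
    F.σ * (v - u) ≤ |F.branch i v - F.branch i u| := by
  obtain ⟨z, hz, hzslope⟩ := exists_deriv_eq_slope (F.branch i) huv
    (F.branch_smooth i).continuous.continuousOn
    ((F.branch_smooth i).differentiable one_ne_zero).differentiableOn
  have hz' : z ∈ Icc (F.a i.castSucc) (F.a i.succ) := ⟨hu.trans hz.1.le, hz.2.le.trans hv⟩
  have h2 := F.branch_expand i z hz'
  rw [hzslope, abs_div, abs_of_pos (sub_pos.2 huv)] at h2
  exact (le_div_iff₀ (sub_pos.2 huv)).1 h2

end PWE

/-- for a piecewise expanding map with `σ > 2`, every nondegenerate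
interval `I ⊆ [0,1]` contains an open subinterval `W` mapped by some iterate `f^i`
diffeomorphically onto the interior of some partition interval `I_j`. -/
theorem stmt0 {m : ℕ} (F : PWE m) (hσ : 2 < F.σ) (I : Set ℝ)
    (hI : I ⊆ Icc 0 1) (hconn : I.OrdConnected) (hne : (interior I).Nonempty) :
    ∃ i : ℕ, 1 ≤ i ∧ ∃ c d : ℝ, c < d ∧ Ioo c d ⊆ I ∧ ∃ j : Fin m,
      Set.BijOn (F.toFun^[i]) (Ioo c d) (Ioo (F.a j.castSucc) (F.a j.succ)) ∧
      ContDiffOn ℝ 1 (F.toFun^[i]) (Ioo c d) ∧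
      ∀ x ∈ Ioo c d, ∃ d' : ℝ, HasDerivAt (F.toFun^[i]) d' x ∧ d' ≠ 0 := by
  classical
  by_contra hgoal
  have hσ0 : (0 : ℝ) < F.σ := by linarith
  -- ### choose an initial interval avoiding all partition points
  obtain ⟨x₀, hx₀⟩ := hne
  obtain ⟨ε, hε, hball⟩ := Metric.isOpen_iff.1 isOpen_interior x₀ hx₀
  rw [Real.ball_eq_Ioo] at hball
  have hIoo : Ioo (x₀ - ε) (x₀ + ε) ⊆ I := fun y hy => interior_subset (hball hy)
  have hαβ : x₀ - ε < x₀ + ε := by linarith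
  have hinf : (Ioo (x₀ - ε) (x₀ + ε) \ range F.a).Infinite :=
    (Set.Ioo_infinite hαβ).diff (finite_range F.a)
  obtain ⟨y, hy⟩ := hinf.nonempty
  have hy01 : y ∈ Icc (0 : ℝ) 1 := hI (hIoo hy.1)
  obtain ⟨p, hp, -⟩ := F.branch_cover y hy01
  have hyA : F.a p.castSucc < y := lt_of_le_of_ne hp.1 (fun h => hy.2 ⟨p.castSucc, h⟩)
  have hyB : y < F.a p.succ := lt_of_le_of_ne hp.2 (fun h => hy.2 ⟨p.succ, h.symm⟩)
  set c₀ := max (x₀ - ε) (F.a p.castSucc) with hc₀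
  set d₀ := min (x₀ + ε) (F.a p.succ) with hd₀
  have hc₀d₀ : c₀ < d₀ := (max_lt hy.1.1 hyA).trans (lt_min hy.1.2 hyB)
  have hsub0I : Ioo c₀ d₀ ⊆ I :=
    (Ioo_subset_Ioo (le_max_left _ _) (min_le_left _ _)).trans hIoo
  have hsub0B : Ioo c₀ d₀ ⊆ Ioo (F.a p.castSucc) (F.a p.succ) :=
    Ioo_subset_Ioo (le_max_right _ _) (min_le_right _ _)
  have hsub0B' : Icc c₀ d₀ ⊆ Icc (F.a p.castSucc) (F.a p.succ) :=
    Icc_subset_Icc (le_max_right _ _) (min_le_right _ _)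
  have hL₀ : 0 < d₀ - c₀ := sub_pos.2 hc₀d₀
  -- ### growth invariant
  have key : ∀ n : ℕ, ∃ c d : ℝ, ∃ g : ℝ → ℝ, c < d ∧ Ioo c d ⊆ Ioo c₀ d₀ ∧
      ContDiff ℝ 1 g ∧ EqOn (F.toFun^[n + 1]) g (Ioo c d) ∧
      (∀ x ∈ Icc c d, deriv g x ≠ 0) ∧
      (StrictMonoOn g (Icc c d) ∨ StrictAntiOn g (Icc c d)) ∧
      MapsTo g (Icc c d) (Icc 0 1) ∧
      (F.σ / 2) ^ (n + 1) * (d₀ - c₀) ≤ |g d - g c| := by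
    intro n
    induction n with
    | zero =>
      refine ⟨c₀, d₀, F.branch p, hc₀d₀, Subset.rfl, F.branch_smooth p, ?_, ?_, ?_, ?_, ?_⟩
      · intro x hx
        rw [Function.iterate_one]
        exact F.branch_eq p (hsub0B hx)
      · exact fun x hx => F.deriv_branch_ne p (hsub0B' hx)
      · exact (F.branch_monoOrAnti p).imp (fun h => h.mono hsub0B') (fun h => h.mono hsub0B')
      · exact fun x hx => F.branch_mapsTo p (hsub0B' hx)
      · have h1 := F.branch_expand_image p (le_max_right _ _) hc₀d₀ (min_le_right _ _)
        rw [pow_one]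
        nlinarith
    | succ n ih =>
      obtain ⟨c, d, g, hcd, hsub, hg1, heq, hdne, hmono, hmaps, hlen⟩ := ih
      have hgc : Continuous g := hg1.continuous
      have hccd : c ∈ Icc c d := left_mem_Icc.2 hcd.le
      have hdcd : d ∈ Icc c d := right_mem_Icc.2 hcd.le
      -- unified description of the image interval
      have hmain : ∃ c' d' : ℝ, c' < d' ∧ (F.σ / 2) ^ (n + 1) * (d₀ - c₀) ≤ d' - c' ∧
          0 ≤ c' ∧ d' ≤ 1 ∧
          ∀ u' v', c' ≤ u' → u' < v' → v' ≤ d' →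
            ∃ u v, c ≤ u ∧ u < v ∧ v ≤ d ∧ g '' Ioo u v = Ioo u' v' ∧
              MapsTo g (Icc u v) (Icc u' v') ∧
              ((g u = u' ∧ g v = v') ∨ (g u = v' ∧ g v = u')) := by
        rcases hmono with hm | hm
        · have hGcd : g c < g d := hm hccd hdcd hcd
          refine ⟨g c, g d, hGcd, ?_, (hmaps hccd).1, (hmaps hdcd).2, ?_⟩
          · rwa [abs_of_pos (sub_pos.2 hGcd)] at hlen
          · intro u' v' h1 h3 h2
            obtain ⟨u, v, hcu, huv, hvd, hgu, hgv⟩ :=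
              aux_pullback_mono hgc hcd hm h1 h3 h2
            have hm' : StrictMonoOn g (Icc u v) := hm.mono (Icc_subset_Icc hcu hvd)
            refine ⟨u, v, hcu, huv, hvd, ?_, ?_, Or.inl ⟨hgu, hgv⟩⟩
            · rw [aux_image_Ioo hgc huv hm', hgu, hgv]
            · intro x hx
              exact ⟨hgu ▸ hm'.monotoneOn (left_mem_Icc.2 huv.le) hx hx.1,
                     hgv ▸ hm'.monotoneOn hx (right_mem_Icc.2 huv.le) hx.2⟩
        · have hGcd : g d < g c := hm hccd hdcd hcd
          refine ⟨g d, g c, hGcd, ?_, (hmaps hdcd).1, (hmaps hccd).2, ?_⟩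
          · rwa [abs_of_neg (sub_neg.2 hGcd), neg_sub] at hlen
          · intro u' v' h1 h3 h2
            obtain ⟨u, v, hcu, huv, hvd, hgu, hgv⟩ :=
              aux_pullback_anti hgc hcd hm h1 h3 h2
            have hm' : StrictAntiOn g (Icc u v) := hm.mono (Icc_subset_Icc hcu hvd)
            refine ⟨u, v, hcu, huv, hvd, ?_, ?_, Or.inr ⟨hgu, hgv⟩⟩
            · rw [aux_image_Ioo_anti hgc huv hm', hgu, hgv]
            · intro x hx
              exact ⟨hgv ▸ hm'.antitoneOn hx (right_mem_Icc.2 huv.le) hx.2,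
                     hgu ▸ hm'.antitoneOn (left_mem_Icc.2 huv.le) hx hx.1⟩
      obtain ⟨c', d', hc'd', hlen', hc'0, hd'1, hpull⟩ := hmain
      by_cases hA : ∃ q r : Fin (m + 1), q < r ∧ F.a q ∈ Ioo c' d' ∧ F.a r ∈ Ioo c' d'
      · -- the image contains a whole partition interval: contradiction with hgoal
        exfalso
        obtain ⟨q, r, hqr, hq, hr⟩ := hA
        have hqm : (q : ℕ) < m := by
          have h1 : (q : ℕ) < (r : ℕ) := hqr
          have h2 : (r : ℕ) ≤ m := Nat.lt_succ_iff.mp r.isLt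
          omega
        set j : Fin m := ⟨(q : ℕ), hqm⟩ with hj
        have hjc : j.castSucc = q := by
          apply Fin.ext
          simp [hj]
        have hjs : j.succ ≤ r := by
          rw [Fin.le_def]
          have h1 : (q : ℕ) < (r : ℕ) := hqr
          simp only [Fin.val_succ, hj]
          omega
        have hq' : c' < F.a j.castSucc := by rw [hjc]; exact hq.1
        have hr' : F.a j.succ < d' := (F.ha.monotone hjs).trans_lt hr.2
        obtain ⟨u, v, hcu, huv, hvd, himg2, hmaps2, -⟩ :=
          hpull (F.a j.castSucc) (F.a j.succ) hq'.le (F.a_lt j) hr'.le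
        have hIoouv : Ioo u v ⊆ Ioo c d := fun x hx => ⟨hcu.trans_lt hx.1, hx.2.trans_le hvd⟩
        have hIccuv : Icc u v ⊆ Icc c d := Icc_subset_Icc hcu hvd
        have hEq : EqOn (F.toFun^[n + 1]) g (Ioo u v) := fun x hx => heq (hIoouv hx)
        have hWI : Ioo u v ⊆ I := fun x hx => hsub0I (hsub (hIoouv hx))
        have hinj : InjOn g (Ioo u v) := by
          rcases hmono with hm | hm
          · exact ((hm.mono hIccuv).injOn).mono Ioo_subset_Icc_self
          · exact ((hm.mono hIccuv).injOn).mono Ioo_subset_Icc_self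
        have himgF : F.toFun^[n + 1] '' Ioo u v = Ioo (F.a j.castSucc) (F.a j.succ) := by
          rw [Set.image_congr hEq, himg2]
        have hbij : Set.BijOn (F.toFun^[n + 1]) (Ioo u v)
            (Ioo (F.a j.castSucc) (F.a j.succ)) := by
          refine ⟨fun x hx => ?_, hinj.congr (fun x hx => (hEq hx).symm), fun x hx => ?_⟩
          · rw [← himgF]
            exact mem_image_of_mem _ hx
          · rw [himgF]
            exact hx
        have hcdiff : ContDiffOn ℝ 1 (F.toFun^[n + 1]) (Ioo u v) :=
          (hg1.contDiffOn).congr (fun x hx => hEq hx)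
        refine hgoal ⟨n + 1, by omega, u, v, huv, hWI, j, hbij, hcdiff, fun x hx => ?_⟩
        have hgd : HasDerivAt g (deriv g x) x := (hg1.differentiable one_ne_zero x).hasDerivAt
        refine ⟨deriv g x, hgd.congr_of_eventuallyEq ?_, hdne x (hIccuv (Ioo_subset_Icc_self hx))⟩
        filter_upwards [isOpen_Ioo.mem_nhds hx] with z hz using hEq hz
      · -- at most one partition point in the image: keep expanding
        have hhalf : ∃ u' v', c' ≤ u' ∧ u' < v' ∧ v' ≤ d' ∧
            (d' - c') / 2 ≤ v' - u' ∧ ∀ q : Fin (m + 1), F.a q ∉ Ioo u' v' := by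
          by_cases hP : ∃ q : Fin (m + 1), F.a q ∈ Ioo c' d'
          · obtain ⟨q, hq⟩ := hP
            rcases le_or_gt (F.a q) ((c' + d') / 2) with h | h
            · refine ⟨F.a q, d', hq.1.le, hq.2, le_rfl, by linarith [hq.2], ?_⟩
              intro r hr
              exact hA ⟨q, r, F.ha.lt_iff_lt.1 hr.1, hq, ⟨hq.1.trans hr.1, hr.2⟩⟩
            · refine ⟨c', F.a q, le_rfl, hq.1, hq.2.le, by linarith [hq.1], ?_⟩
              intro r hr
              exact hA ⟨r, q, F.ha.lt_iff_lt.1 hr.2, ⟨hr.1, hr.2.trans hq.2⟩, hq⟩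
          · push_neg at hP
            exact ⟨c', d', le_rfl, hc'd', le_rfl, by linarith, hP⟩
        obtain ⟨u', v', hcu', hu'v', hv'd', hlen2, hnopt⟩ := hhalf
        set w := (u' + v') / 2 with hw
        have hwmem : w ∈ Ioo u' v' := ⟨by rw [hw]; linarith, by rw [hw]; linarith⟩
        have hw01 : w ∈ Icc (0 : ℝ) 1 :=
          ⟨hc'0.trans (hcu'.trans hwmem.1.le), (hwmem.2.le.trans hv'd').trans hd'1⟩
        obtain ⟨p', hp', -⟩ := F.branch_cover w hw01
        have hAu' : F.a p'.castSucc ≤ u' := by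
          by_contra h
          push_neg at h
          exact hnopt p'.castSucc ⟨h, hp'.1.trans_lt hwmem.2⟩
        have hBv' : v' ≤ F.a p'.succ := by
          by_contra h
          push_neg at h
          exact hnopt p'.succ ⟨hwmem.1.trans_le hp'.2, h⟩
        obtain ⟨u, v, hcu, huv, hvd, himg2, hmaps2, hcase⟩ := hpull u' v' hcu' hu'v' hv'd'
        have hIoouv : Ioo u v ⊆ Ioo c d := fun x hx => ⟨hcu.trans_lt hx.1, hx.2.trans_le hvd⟩
        have hIccuv : Icc u v ⊆ Icc c d := Icc_subset_Icc hcu hvd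
        have hmapsAB : MapsTo g (Icc u v) (Icc (F.a p'.castSucc) (F.a p'.succ)) :=
          fun x hx => Icc_subset_Icc hAu' hBv' (hmaps2 hx)
        have hmono2 : StrictMonoOn g (Icc u v) ∨ StrictAntiOn g (Icc u v) :=
          hmono.imp (fun h => h.mono hIccuv) (fun h => h.mono hIccuv)
        refine ⟨u, v, F.branch p' ∘ g, huv, fun x hx => hsub (hIoouv hx),
          (F.branch_smooth p').comp hg1, ?_, ?_, ?_, ?_, ?_⟩
        · intro x hx
          have hx' : x ∈ Ioo c d := hIoouv hx
          have hgx : g x ∈ Ioo (F.a p'.castSucc) (F.a p'.succ) := by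
            have : g x ∈ Ioo u' v' := himg2 ▸ mem_image_of_mem g hx
            exact ⟨hAu'.trans_lt this.1, this.2.trans_le hBv'⟩
          show F.toFun^[n + 1 + 1] x = F.branch p' (g x)
          rw [Function.iterate_succ_apply', heq hx']
          exact F.branch_eq p' hgx
        · intro x hx
          have hdg : DifferentiableAt ℝ g x := hg1.differentiable one_ne_zero x
          have hdb : DifferentiableAt ℝ (F.branch p') (g x) :=
            (F.branch_smooth p').differentiable one_ne_zero _
          rw [deriv_comp (x := x) hdb hdg]
          exact mul_ne_zero (F.deriv_branch_ne p' (hmapsAB hx)) (hdne x (hIccuv hx))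
        · rcases F.branch_monoOrAnti p' with hb | hb <;> rcases hmono2 with hg' | hg'
          · exact Or.inl (hb.comp hg' hmapsAB)
          · exact Or.inr (hb.comp_strictAntiOn hg' hmapsAB)
          · exact Or.inr (hb.comp_strictMonoOn hg' hmapsAB)
          · exact Or.inl (hb.comp hg' hmapsAB)
        · exact fun x hx => F.branch_mapsTo p' (hmapsAB hx)
        · have hexp := F.branch_expand_image p' hAu' hu'v' hBv'
          have habs : |F.branch p' (g v) - F.branch p' (g u)| =
              |F.branch p' v' - F.branch p' u'| := by
            rcases hcase with ⟨h1, h2⟩ | ⟨h1, h2⟩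
            · rw [h1, h2]
            · rw [h1, h2, abs_sub_comm]
          have hσ2 : (1 : ℝ) < F.σ / 2 := by linarith
          have hpowpos : (0 : ℝ) < (F.σ / 2) ^ (n + 1) := pow_pos (by linarith) _
          show (F.σ / 2) ^ (n + 1 + 1) * (d₀ - c₀) ≤ |(F.branch p' ∘ g) v - (F.branch p' ∘ g) u|
          have hstep : (F.σ / 2) ^ (n + 1 + 1) * (d₀ - c₀) =
              (F.σ / 2) * ((F.σ / 2) ^ (n + 1) * (d₀ - c₀)) := by ring
          simp only [Function.comp_apply]
          rw [habs, hstep]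
          have h1 : (F.σ / 2) * ((F.σ / 2) ^ (n + 1) * (d₀ - c₀)) ≤ (F.σ / 2) * (d' - c') :=
            mul_le_mul_of_nonneg_left hlen' (by linarith)
          have h2 : (F.σ / 2) * (d' - c') ≤ F.σ * (v' - u') := by nlinarith
          linarith
  -- ### contradiction: the image lengths are bounded by 1
  obtain ⟨N, hN⟩ := pow_unbounded_of_one_lt (1 / (d₀ - c₀)) (show (1 : ℝ) < F.σ / 2 by linarith)
  obtain ⟨c, d, g, hcd, hsub, hg1, heq, hdne, hmono, hmaps, hlen⟩ := key N
  have h1 : (1 : ℝ) < (F.σ / 2) ^ N * (d₀ - c₀) := by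
    rw [← div_lt_iff₀ hL₀]
    simpa [div_eq_mul_inv] using hN
  have h2 : (F.σ / 2) ^ N * (d₀ - c₀) ≤ (F.σ / 2) ^ (N + 1) * (d₀ - c₀) := by
    have : (F.σ / 2) ^ N ≤ (F.σ / 2) ^ (N + 1) :=
      pow_le_pow_right₀ (by linarith) (Nat.le_succ N)
    nlinarith
  have hgc01 : g c ∈ Icc (0 : ℝ) 1 := hmaps (left_mem_Icc.2 hcd.le)
  have hgd01 : g d ∈ Icc (0 : ℝ) 1 := hmaps (right_mem_Icc.2 hcd.le)
  have : |g d - g c| ≤ 1 := by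
    rw [abs_sub_le_iff]
    constructor <;> linarith [hgc01.1, hgc01.2, hgd01.1, hgd01.2]
  linarith
end

section
/- Let f be piecewise expanding with expansion constant σ > 2 on intervals I_1,…,I_m, and let ℓ(f) = min_j |I_j|. Then for every nondegenerate interval I ⊆ [0,1] there exist i ≥ 1 and an open subinterval W ⊆ I such that f^{i+1}(W) is an open interval of length at least σ·ℓ(f). -/
open Set MeasureTheory Filter Function
open scoped ENNReal

section Stmt1Aux

open Set Function

/-- On `[A,B]`, a C¹ function with `σ ≤ deriv` maps open intervals to open intervals,
expanding by `σ`, and we can pull back subintervals. -/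
lemma stmt1_mono_img (h : ℝ → ℝ) (hh : ContDiff ℝ 1 h) {σ A B : ℝ} (hσ : 0 < σ)
    (hd : ∀ x ∈ Icc A B, σ ≤ deriv h x) :
    ∀ p q, A ≤ p → p < q → q ≤ B →
      h '' Ioo p q = Ioo (h p) (h q) ∧ σ * (q - p) ≤ h q - h p ∧
      ∀ u v, h p ≤ u → u < v → v ≤ h q →
        ∃ p' q', p ≤ p' ∧ p' < q' ∧ q' ≤ q ∧ h p' = u ∧ h q' = v := by
  have hcont : Continuous h := hh.continuous
  have hmono : StrictMonoOn h (Icc A B) :=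
    strictMonoOn_of_deriv_pos (convex_Icc A B) hcont.continuousOn
      (fun x hx => by
        rw [interior_Icc] at hx
        exact hσ.trans_le (hd x (Ioo_subset_Icc_self hx)))
  intro p q hAp hpq hqB
  have hpAB : p ∈ Icc A B := ⟨hAp, hpq.le.trans hqB⟩
  have hqAB : q ∈ Icc A B := ⟨hAp.trans hpq.le, hqB⟩
  refine ⟨?_, ?_, ?_⟩
  · ext y
    constructor
    · rintro ⟨x, hx, rfl⟩
      have hxAB : x ∈ Icc A B := ⟨hAp.trans hx.1.le, hx.2.le.trans hqB⟩
      exact ⟨hmono hpAB hxAB hx.1, hmono hxAB hqAB hx.2⟩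
    · rintro ⟨hy1, hy2⟩
      obtain ⟨x, hx, hxy⟩ := intermediate_value_Icc hpq.le hcont.continuousOn
        (⟨hy1.le, hy2.le⟩ : y ∈ Icc (h p) (h q))
      have hxAB : x ∈ Icc A B := ⟨hAp.trans hx.1, hx.2.trans hqB⟩
      refine ⟨x, ⟨?_, ?_⟩, hxy⟩
      · exact (hmono.lt_iff_lt hpAB hxAB).mp (by rw [hxy]; exact hy1)
      · exact (hmono.lt_iff_lt hxAB hqAB).mp (by rw [hxy]; exact hy2)
  · obtain ⟨c, hc, hc2⟩ := exists_deriv_eq_slope h hpq hcont.continuousOn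
      ((hh.differentiable one_ne_zero).differentiableOn)
    have hcAB : c ∈ Icc A B := ⟨hAp.trans hc.1.le, hc.2.le.trans hqB⟩
    have := hd c hcAB
    rw [hc2] at this
    have hq0 : (0:ℝ) < q - p := by linarith
    calc σ * (q - p) ≤ (h q - h p) / (q - p) * (q - p) :=
          mul_le_mul_of_nonneg_right this hq0.le
      _ = h q - h p := by field_simp
  · intro u v huv1 huv hv
    obtain ⟨p', hp', hp'e⟩ := intermediate_value_Icc hpq.le hcont.continuousOn
      (⟨huv1, (huv.le.trans hv)⟩ : u ∈ Icc (h p) (h q))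
    obtain ⟨q', hq', hq'e⟩ := intermediate_value_Icc hpq.le hcont.continuousOn
      (⟨huv1.trans huv.le, hv⟩ : v ∈ Icc (h p) (h q))
    have hp'AB : p' ∈ Icc A B := ⟨hAp.trans hp'.1, hp'.2.trans hqB⟩
    have hq'AB : q' ∈ Icc A B := ⟨hAp.trans hq'.1, hq'.2.trans hqB⟩
    refine ⟨p', q', hp'.1, ?_, hq'.2, hp'e, hq'e⟩
    exact (hmono.lt_iff_lt hp'AB hq'AB).mp (by rw [hp'e, hq'e]; exact huv)

lemma stmt1_neg_img (h : ℝ → ℝ) (s : Set ℝ) (a b : ℝ) (hs : h '' s = Ioo a b) :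
    (fun x => -h x) '' s = Ioo (-b) (-a) := by
  have : (fun x => -h x) '' s = Neg.neg '' (h '' s) := by
    rw [← Set.image_comp]; rfl
  rw [this, hs]
  ext y
  constructor
  · rintro ⟨x, hx, rfl⟩; exact ⟨by linarith [hx.2], by linarith [hx.1]⟩
  · intro hy; exact ⟨-y, ⟨by linarith [hy.2], by linarith [hy.1]⟩, by ring⟩

/-- Each branch of a `PWE` maps an open subinterval of its domain to an open interval,
expanding lengths by `σ`; moreover subintervals of the image pull back to subintervals. -/
lemma stmt1_branch_img {m : ℕ} (F : PWE m) (i : Fin m) :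
    ∀ p q, F.a i.castSucc ≤ p → p < q → q ≤ F.a i.succ →
      ∃ c' d', c' < d' ∧ F.σ * (q - p) ≤ d' - c' ∧ F.branch i '' Ioo p q = Ioo c' d' ∧
        ∀ u v, c' ≤ u → u < v → v ≤ d' →
          ∃ p' q', p ≤ p' ∧ p' < q' ∧ q' ≤ q ∧ F.branch i '' Ioo p' q' = Ioo u v := by
  set g := F.branch i with hgdef
  set A := F.a i.castSucc
  set B := F.a i.succ
  have hsm : ContDiff ℝ 1 g := F.branch_smooth i
  have hexp : ∀ x ∈ Icc A B, F.σ ≤ |deriv g x| := F.branch_expand i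
  have hσ : (0:ℝ) < F.σ := lt_trans one_pos F.hσ
  have hcd : Continuous (deriv g) := hsm.continuous_deriv le_rfl
  have hsign : (∀ x ∈ Icc A B, F.σ ≤ deriv g x) ∨
      (∀ x ∈ Icc A B, F.σ ≤ deriv (fun y => -g y) x) := by
    have habs : ∀ x ∈ Icc A B, F.σ ≤ deriv g x ∨ deriv g x ≤ -F.σ := by
      intro x hx
      rcases abs_cases (deriv g x) with ⟨he, _⟩ | ⟨he, _⟩
      · left; rw [← he]; exact hexp x hx
      · right; have := hexp x hx; rw [he] at this; linarith
    by_cases hall : ∀ x ∈ Icc A B, F.σ ≤ deriv g x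
    · exact Or.inl hall
    · push_neg at hall
      obtain ⟨y, hy, hylt⟩ := hall
      have hyneg : deriv g y ≤ -F.σ := by
        rcases habs y hy with h | h
        · linarith
        · exact h
      right
      intro x hx
      rcases habs x hx with h | h
      · exfalso
        have h0 : (0:ℝ) ∈ uIcc (deriv g x) (deriv g y) := by
          rw [Set.mem_uIcc]; right; constructor <;> linarith
        obtain ⟨z, hz, hz0⟩ := intermediate_value_uIcc (f := deriv g)
          hcd.continuousOn h0
        have hzAB : z ∈ Icc A B := Set.ordConnected_Icc.uIcc_subset hx hy hz
        have := hexp z hzAB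
        rw [hz0] at this; simp at this; linarith
      · rw [deriv.fun_neg]; linarith
  rcases hsign with hs | hs
  · intro p q hpA hpq hqB
    obtain ⟨h1, h2, h3⟩ := stmt1_mono_img g hsm hσ hs p q hpA hpq hqB
    refine ⟨g p, g q, by nlinarith, h2, h1, ?_⟩
    intro u v hu huv hv
    obtain ⟨p', q', hpp', hp'q', hq'q, he1, he2⟩ := h3 u v hu huv hv
    obtain ⟨h1', _, _⟩ := stmt1_mono_img g hsm hσ hs p' q'
      (hpA.trans hpp') hp'q' (hq'q.trans hqB)
    exact ⟨p', q', hpp', hp'q', hq'q, by rw [h1', he1, he2]⟩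
  · intro p q hpA hpq hqB
    set h : ℝ → ℝ := fun y => -g y with hdef
    have hhc : ContDiff ℝ 1 h := hsm.neg
    obtain ⟨h1, h2, h3⟩ := stmt1_mono_img h hhc hσ hs p q hpA hpq hqB
    have hg : g = fun x => -h x := by funext x; simp [hdef]
    have h2' : F.σ * (q - p) ≤ g p - g q := by
      have : h q - h p = g p - g q := by simp [hdef]; ring
      linarith [h2, this.symm.le, this.le]
    have hprod : 0 < F.σ * (q - p) := mul_pos hσ (by linarith)
    have himg : g '' Ioo p q = Ioo (-(h q)) (-(h p)) := by
      rw [hg]; exact stmt1_neg_img h (Ioo p q) (h p) (h q) h1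
    refine ⟨-(h q), -(h p), by simp [hdef]; linarith, by simp [hdef]; linarith, himg, ?_⟩
    intro u v hu huv hv
    obtain ⟨p', q', hpp', hp'q', hq'q, he1, he2⟩ := h3 (-v) (-u)
      (by simp [hdef] at hu hv ⊢; linarith) (by linarith) (by simp [hdef] at hu hv ⊢; linarith)
    obtain ⟨h1', _, _⟩ := stmt1_mono_img h hhc hσ hs p' q'
      (hpA.trans hpp') hp'q' (hq'q.trans hqB)
    refine ⟨p', q', hpp', hp'q', hq'q, ?_⟩
    rw [hg]
    have := stmt1_neg_img h (Ioo p' q') (h p') (h q') h1'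
    rw [he1, he2] at this
    simpa using this

lemma stmt1_Ioo_bounds {c d : ℝ} (h : Ioo c d ⊆ Icc (0:ℝ) 1) (hcd : c < d) :
    0 ≤ c ∧ d ≤ 1 := by
  constructor
  · by_contra h0
    push_neg at h0
    have hmin : c < min d 0 := lt_min hcd h0
    have hz : (c + min d 0)/2 ∈ Ioo c d := by
      constructor
      · linarith
      · have h1 : min d 0 ≤ d := min_le_left _ _
        linarith
    have h2 : min d 0 ≤ 0 := min_le_right _ _
    linarith [(h hz).1]
  · by_contra h1
    push_neg at h1
    have hmax : max c 1 < d := max_lt hcd h1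
    have hz : (max c 1 + d)/2 ∈ Ioo c d := by
      constructor
      · have : c ≤ max c 1 := le_max_left _ _
        linarith
      · linarith
    have h2 : (1:ℝ) ≤ max c 1 := le_max_right _ _
    linarith [(h hz).2]

/-- If an interval inside `[0,1]` contains no partition point, it lies in one branch domain. -/
lemma stmt1_no_partition {m : ℕ} (F : PWE m) {e₁ e₂ : ℝ} (h12 : e₁ < e₂) (h0 : 0 ≤ e₁)
    (h1 : e₂ ≤ 1) (hnp : ∀ k : Fin (m+1), F.a k ∉ Ioo e₁ e₂) :
    ∃ i : Fin m, F.a i.castSucc ≤ e₁ ∧ e₂ ≤ F.a i.succ := by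
  classical
  set T : Finset (Fin (m+1)) := Finset.univ.filter (fun k => F.a k ≤ e₁) with hT
  have h0T : (0 : Fin (m+1)) ∈ T := by simp [hT, F.ha0, h0]
  have hTne : T.Nonempty := ⟨0, h0T⟩
  set k := T.max' hTne with hk
  have hkT : k ∈ T := T.max'_mem hTne
  have hkle : F.a k ≤ e₁ := by
    have := Finset.mem_filter.mp hkT
    exact this.2
  have hklast : k ≠ Fin.last m := by
    intro h
    rw [h, F.ha1] at hkle
    linarith
  refine ⟨k.castPred hklast, by rw [Fin.castSucc_castPred]; exact hkle, ?_⟩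
  by_contra hlt
  push_neg at hlt
  have h2 : e₁ < F.a (k.castPred hklast).succ := by
    by_contra hle
    push_neg at hle
    have hmem : (k.castPred hklast).succ ∈ T := by simp [hT, hle]
    have hle2 := T.le_max' _ hmem
    rw [← hk] at hle2
    have : (k.castPred hklast).castSucc < (k.castPred hklast).succ :=
      Fin.castSucc_lt_succ
    rw [Fin.castSucc_castPred] at this
    exact absurd hle2 (not_le.mpr this)
  exact hnp (k.castPred hklast).succ ⟨h2, hlt⟩

/-- the conclusion of Statement 1 -/
def Stmt1Concl {m : ℕ} (F : PWE m) (I : Set ℝ) : Prop :=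
  ∃ i : ℕ, 1 ≤ i ∧ ∃ c d : ℝ, c < d ∧ Ioo c d ⊆ I ∧
    ∃ c' d' : ℝ, F.toFun^[i + 1] '' Ioo c d = Ioo c' d' ∧ F.σ * ell F ≤ d' - c'

/-- the inductive invariant: the interval `(c', d')` of length at least `L` is realized
as the image under `f^[n]` of an open subinterval of `I`, and every subinterval of
`(c', d')` similarly pulls back. -/
def Stmt1Inv {m : ℕ} (F : PWE m) (I : Set ℝ) (n : ℕ) (L : ℝ) : Prop :=
  ∃ c' d' : ℝ, c' < d' ∧ L ≤ d' - c' ∧ Ioo c' d' ⊆ Icc 0 1 ∧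
    ∀ u v : ℝ, c' ≤ u → u < v → v ≤ d' →
      ∃ p q : ℝ, p < q ∧ Ioo p q ⊆ I ∧ F.toFun^[n] '' Ioo p q = Ioo u v

lemma stmt1_f_eq_branch {m : ℕ} (F : PWE m) (i : Fin m) {p q : ℝ}
    (hA : F.a i.castSucc ≤ p) (hB : q ≤ F.a i.succ) :
    F.toFun '' Ioo p q = F.branch i '' Ioo p q := by
  have hsub : Ioo p q ⊆ Ioo (F.a i.castSucc) (F.a i.succ) := by
    intro y hy
    exact ⟨hA.trans_lt hy.1, hy.2.trans_le hB⟩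
  exact Set.EqOn.image_eq ((F.branch_eq i).mono hsub)

end Stmt1Aux

section Stmt1Main

open Set Function

/-- base case of the induction: some open subinterval of `I` lies in a single branch
domain, and its image is an interval of positive length. -/
lemma stmt1_base {m : ℕ} (F : PWE m) (I : Set ℝ) (hI : I ⊆ Icc 0 1)
    (hne : (interior I).Nonempty) :
    ∃ L : ℝ, 0 < L ∧ Stmt1Inv F I 1 L := by
  classical
  obtain ⟨x, hx⟩ := hne
  rw [mem_interior_iff_mem_nhds] at hx
  obtain ⟨ε, hε, hball⟩ := Metric.mem_nhds_iff.mp hx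
  rw [Real.ball_eq_Ioo] at hball
  have hIoo : Ioo (x - ε) (x + ε) ⊆ I := hball
  have hlem := stmt1_Ioo_bounds (hIoo.trans hI) (by linarith)
  -- pick a maximal partition-free subinterval around some point
  set S : Finset ℝ := Finset.image F.a Finset.univ with hS
  set S₁ : Finset ℝ := (insert (x - ε) S).filter (· < x) with hS₁
  have hS₁ne : S₁.Nonempty := ⟨x - ε, by simp [hS₁]; linarith⟩
  set e₁ := S₁.max' hS₁ne with he₁
  have he₁x : e₁ < x := by
    have := Finset.mem_filter.mp (S₁.max'_mem hS₁ne)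
    exact this.2
  have he₁ge : x - ε ≤ e₁ := S₁.le_max' _ (by simp [hS₁]; linarith)
  set S₂ : Finset ℝ := (insert (x + ε) S).filter (e₁ < ·) with hS₂
  have hS₂ne : S₂.Nonempty := ⟨x + ε, by simp [hS₂]; linarith⟩
  set e₂ := S₂.min' hS₂ne with he₂
  have he₂gt : e₁ < e₂ := by
    have := Finset.mem_filter.mp (S₂.min'_mem hS₂ne)
    exact this.2
  have he₂le : e₂ ≤ x + ε := S₂.min'_le _ (by simp [hS₂]; linarith)
  have hnp : ∀ k : Fin (m+1), F.a k ∉ Ioo e₁ e₂ := by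
    intro k hk
    have hmem : F.a k ∈ S₂ := by
      rw [hS₂]
      refine Finset.mem_filter.mpr ⟨Finset.mem_insert_of_mem ?_, hk.1⟩
      exact Finset.mem_image_of_mem _ (Finset.mem_univ k)
    exact absurd (S₂.min'_le _ hmem) (not_le.mpr hk.2)
  obtain ⟨i, hiA, hiB⟩ := stmt1_no_partition F he₂gt (by linarith [hlem.1])
    (by linarith [hlem.2]) hnp
  obtain ⟨c', d', hcd, hlen, himg, hpull⟩ := stmt1_branch_img F i e₁ e₂ hiA he₂gt hiB
  have hsubI : Ioo e₁ e₂ ⊆ I := fun y hy =>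
    hIoo ⟨by linarith [hy.1], by linarith [hy.2]⟩
  refine ⟨d' - c', by linarith, c', d', hcd, le_rfl, ?_, ?_⟩
  · -- image inside [0,1]
    have h1 : Ioo c' d' = F.toFun '' Ioo e₁ e₂ := by
      rw [stmt1_f_eq_branch F i hiA hiB, himg]
    rw [h1]
    exact (F.mapsTo.mono_left (hsubI.trans hI)).image_subset
  · intro u v hu huv hv
    obtain ⟨p', q', hp', hpq', hq', himg'⟩ := hpull u v hu huv hv
    refine ⟨p', q', hpq', ?_, ?_⟩
    · exact fun y hy => hsubI ⟨hp'.trans_lt hy.1, hy.2.trans_le hq'⟩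
    · rw [Function.iterate_one, stmt1_f_eq_branch F i (hiA.trans hp') (hq'.trans hiB)]
      exact himg'

/-- the inductive step: either we are done, or the interval grows by a factor `σ/2`. -/
lemma stmt1_step {m : ℕ} (F : PWE m) (hσ2 : 2 < F.σ) (I : Set ℝ) (hI : I ⊆ Icc 0 1)
    {n : ℕ} (hn : 1 ≤ n) {L : ℝ} (hL : 0 < L) (h : Stmt1Inv F I n L) :
    Stmt1Concl F I ∨ Stmt1Inv F I (n + 1) (F.σ / 2 * L) := by
  classical
  obtain ⟨c', d', hcd, hLle, hsub01, hPB⟩ := h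
  have hσ : (0:ℝ) < F.σ := by linarith
  have hb := stmt1_Ioo_bounds hsub01 hcd
  by_cases hA : ∃ j : Fin m, c' < F.a j.castSucc ∧ F.a j.succ < d'
  · -- a full branch domain is inside (c', d'): finish
    left
    obtain ⟨j, hj1, hj2⟩ := hA
    have hAB : F.a j.castSucc < F.a j.succ := F.ha (Fin.castSucc_lt_succ : j.castSucc < j.succ)
    obtain ⟨p, q, hpq, hpqI, himg⟩ := hPB _ _ hj1.le hAB hj2.le
    obtain ⟨c'', d'', hcd'', hlen'', himg'', _⟩ :=
      stmt1_branch_img F j _ _ le_rfl hAB le_rfl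
    refine ⟨n, hn, p, q, hpq, hpqI, c'', d'', ?_, ?_⟩
    · rw [Function.iterate_succ', Set.image_comp, himg,
        stmt1_f_eq_branch F j le_rfl le_rfl, himg'']
    · have hnm : Nonempty (Fin m) := ⟨⟨0, F.hm⟩⟩
      have hell : ell F ≤ F.a j.succ - F.a j.castSucc :=
        ciInf_le (Set.Finite.bddBelow (Set.finite_range _)) j
      have := mul_le_mul_of_nonneg_left hell hσ.le
      linarith
  · right
    push_neg at hA
    -- at most one partition point lies in (c', d')
    have key : ∀ k : Fin (m+1), F.a k ∈ Ioo c' d' →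
        ∀ k' : Fin (m+1), F.a k' ∈ Ioo c' d' → k = k' := by
      have main : ∀ k k' : Fin (m+1), k < k' →
          F.a k ∈ Ioo c' d' → F.a k' ∈ Ioo c' d' → False := by
        intro k k' hlt hk hk'
        have hklast : k ≠ Fin.last m := by
          intro he
          have : k' ≤ Fin.last m := Fin.le_last k'
          rw [he] at hlt
          exact absurd (hlt.trans_le this) (lt_irrefl _)
        set j := k.castPred hklast with hj
        have hjc : j.castSucc = k := Fin.castSucc_castPred _ _
        have hsucc_le : j.succ ≤ k' := by
          rw [Fin.le_def, Fin.val_succ]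
          have h1 : (j : Fin m).val = k.val := by rw [hj]; simp
          have h2 : k.val < k'.val := hlt
          omega
        have h3 : F.a j.succ ≤ F.a k' := F.ha.monotone hsucc_le
        have h4 := hA j (by rw [hjc]; exact hk.1)
        linarith [hk'.2]
      intro k hk k' hk'
      rcases lt_trichotomy k k' with h | h | h
      · exact (main k k' h hk hk').elim
      · exact h
      · exact (main k' k h hk' hk).elim
    -- choose a partition-free half of (c', d') of at least half the length
    obtain ⟨e₁, e₂, he12, hlen2, heL, heR, hnp⟩ :
        ∃ e₁ e₂ : ℝ, e₁ < e₂ ∧ (d' - c') / 2 ≤ e₂ - e₁ ∧ c' ≤ e₁ ∧ e₂ ≤ d' ∧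
          ∀ k : Fin (m+1), F.a k ∉ Ioo e₁ e₂ := by
      by_cases hT : ∃ k : Fin (m+1), F.a k ∈ Ioo c' d'
      · obtain ⟨k, hk⟩ := hT
        rcases le_or_gt ((c' + d') / 2) (F.a k) with hhalf | hhalf
        · refine ⟨c', F.a k, hk.1, by linarith, le_rfl, hk.2.le, ?_⟩
          intro k' hk'
          have hk'mem : F.a k' ∈ Ioo c' d' := ⟨hk'.1, hk'.2.trans hk.2⟩
          have := key k hk k' hk'mem
          rw [← this] at hk'
          exact absurd hk'.2 (lt_irrefl _)
        · refine ⟨F.a k, d', hk.2, by linarith, hk.1.le, le_rfl, ?_⟩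
          intro k' hk'
          have hk'mem : F.a k' ∈ Ioo c' d' := ⟨hk.1.trans hk'.1, hk'.2⟩
          have := key k hk k' hk'mem
          rw [← this] at hk'
          exact absurd hk'.1 (lt_irrefl _)
      · push_neg at hT
        exact ⟨c', d', hcd, by linarith, le_rfl, le_rfl, fun k hk => hT k hk⟩
    obtain ⟨i, hiA, hiB⟩ := stmt1_no_partition F he12 (by linarith [hb.1])
      (by linarith [hb.2]) hnp
    obtain ⟨c'', d'', hcd'', hlen'', himg'', hpull''⟩ :=
      stmt1_branch_img F i e₁ e₂ hiA he12 hiB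
    refine ⟨c'', d'', hcd'', ?_, ?_, ?_⟩
    · -- length estimate
      have h1 : L / 2 ≤ e₂ - e₁ := by linarith
      have := mul_le_mul_of_nonneg_left h1 hσ.le
      nlinarith
    · -- image inside [0,1]
      obtain ⟨p, q, hpq, hpqI, himgpq⟩ := hPB e₁ e₂ heL he12 heR
      have h1 : Ioo c'' d'' = F.toFun^[n+1] '' Ioo p q := by
        rw [Function.iterate_succ', Set.image_comp, himgpq,
          stmt1_f_eq_branch F i hiA hiB, himg'']
      rw [h1]
      exact ((F.mapsTo.iterate (n+1)).mono_left (hpqI.trans hI)).image_subset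
    · intro u v hu huv hv
      obtain ⟨p₁, q₁, hp₁, hpq₁, hq₁, himg₁⟩ := hpull'' u v hu huv hv
      obtain ⟨p, q, hpq, hpqI, himgpq⟩ := hPB p₁ q₁ (heL.trans hp₁) hpq₁ (hq₁.trans heR)
      refine ⟨p, q, hpq, hpqI, ?_⟩
      rw [Function.iterate_succ', Set.image_comp, himgpq,
        stmt1_f_eq_branch F i (hiA.trans hp₁) (hq₁.trans hiB), himg₁]

end Stmt1Main

/-- for a piecewise expanding map with `σ > 2`, every nondegenerate
interval `I ⊆ [0,1]` contains an open subinterval `W` such that `f^{i+1}(W)` is an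
open interval of length at least `σ ℓ(f)`. -/
theorem stmt1 {m : ℕ} (F : PWE m) (hσ : 2 < F.σ) (I : Set ℝ)
    (hI : I ⊆ Icc 0 1) (hconn : I.OrdConnected) (hne : (interior I).Nonempty) :
    ∃ i : ℕ, 1 ≤ i ∧ ∃ c d : ℝ, c < d ∧ Ioo c d ⊆ I ∧
      ∃ c' d' : ℝ, F.toFun^[i + 1] '' Ioo c d = Ioo c' d' ∧ F.σ * ell F ≤ d' - c' := by
  obtain ⟨L₀, hL₀, hbase⟩ := stmt1_base F I hI hne
  have hσ1 : (1:ℝ) < F.σ / 2 := by linarith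
  have iter : ∀ n : ℕ, Stmt1Concl F I ∨ Stmt1Inv F I (n+1) ((F.σ/2)^n * L₀) := by
    intro n
    induction n with
    | zero => right; simpa using hbase
    | succ k ih =>
      rcases ih with h | h
      · exact Or.inl h
      · have hLpos : 0 < (F.σ/2)^k * L₀ := mul_pos (pow_pos (by linarith) k) hL₀
        rcases stmt1_step F hσ I hI (Nat.le_add_left 1 k) hLpos h with h2 | h2
        · exact Or.inl h2
        · right
          have he : F.σ/2 * ((F.σ/2)^k * L₀) = (F.σ/2)^(k+1) * L₀ := by ring
          rwa [he] at h2
  obtain ⟨n, hnd⟩ := pow_unbounded_of_one_lt (1/L₀) hσ1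
  rcases iter n with h | h
  · exact h
  · exfalso
    obtain ⟨c', d', hcd, hLle, hsub, -⟩ := h
    have hb := stmt1_Ioo_bounds hsub hcd
    have h1 : (1:ℝ) < (F.σ/2)^n * L₀ := by
      have := (div_lt_iff₀ hL₀).mp hnd
      linarith
    linarith
end

section
/- Let f be piecewise expanding with σ > 2, and let B be the set of endpoints of the partition intervals. Then for every interval I ⊆ [0,1] there exist i ∈ ℕ and a subinterval W = (a,b) ⊆ I with a,b ∈ f^{-i}(B) such that W ∩ f^{-k}(B) = ∅ for 0 ≤ k ≤ i. -/
open Set MeasureTheory Filter Function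
open scoped ENNReal

/-- A connected subset of `[0,1]` avoiding `B` lies inside one open branch piece. -/
lemma one_piece {m : ℕ} (F : PWE m) {S : Set ℝ} (hS : S.OrdConnected)
    (hS1 : S ⊆ Icc 0 1) (hSB : ∀ x ∈ S, x ∉ F.B) {x : ℝ} (hx : x ∈ S) :
    ∃ j : Fin m, S ⊆ Ioo (F.a j.castSucc) (F.a j.succ) := by
  obtain ⟨j, hj, -⟩ := F.branch_cover x (hS1 hx)
  refine ⟨j, fun y hy => ?_⟩
  have hx1 : F.a j.castSucc < x := lt_of_le_of_ne hj.1 (fun e => hSB x hx ⟨j.castSucc, e⟩)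
  have hx2 : x < F.a j.succ := lt_of_le_of_ne hj.2 (fun e => hSB x hx ⟨j.succ, e.symm⟩)
  constructor
  · by_contra hc
    push_neg at hc
    exact hSB _ (hS.out hy hx ⟨hc, hx1.le⟩) ⟨j.castSucc, rfl⟩
  · by_contra hc
    push_neg at hc
    exact hSB _ (hS.out hx hy ⟨hx2.le, hc⟩) ⟨j.succ, rfl⟩

/-- MVT expansion for a single branch. -/
lemma branch_exp {m : ℕ} (F : PWE m) (j : Fin m) {u v : ℝ}
    (hu : u ∈ Icc (F.a j.castSucc) (F.a j.succ)) (hv : v ∈ Icc (F.a j.castSucc) (F.a j.succ))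
    (huv : u < v) : F.σ * (v - u) ≤ |F.branch j v - F.branch j u| := by
  obtain ⟨e, he, heq⟩ := exists_hasDerivAt_eq_slope (F.branch j) (deriv (F.branch j)) huv
    ((F.branch_smooth j).continuous.continuousOn)
    (fun z _ => (((F.branch_smooth j).differentiable one_ne_zero) z).hasDerivAt)
  have he' : e ∈ Icc (F.a j.castSucc) (F.a j.succ) :=
    ⟨hu.1.trans he.1.le, he.2.le.trans hv.2⟩
  have hd : F.σ ≤ |deriv (F.branch j) e| := F.branch_expand j e he'
  have hvu : (0:ℝ) < v - u := sub_pos.mpr huv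
  have : |F.branch j v - F.branch j u| = |deriv (F.branch j) e| * (v - u) := by
    rw [heq, abs_div, abs_of_pos hvu, div_mul_cancel₀]
    exact hvu.ne'
  rw [this]
  exact mul_le_mul_of_nonneg_right hd hvu.le

/-- Iterate expansion on an interval whose iterates avoid `B`. -/
lemma iter_exp {m : ℕ} (F : PWE m) (hσ1 : 1 < F.σ) :
    ∀ (n : ℕ) (c d : ℝ), c < d → Ioo c d ⊆ Icc 0 1 →
      (∀ k < n, ∀ x ∈ Ioo c d, F.toFun^[k] x ∉ F.B) →
      ContinuousOn (F.toFun^[n]) (Ioo c d) ∧ MapsTo (F.toFun^[n]) (Ioo c d) (Icc 0 1) ∧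
      ∀ x ∈ Ioo c d, ∀ y ∈ Ioo c d, x < y →
        F.σ ^ n * (y - x) ≤ |F.toFun^[n] y - F.toFun^[n] x| := by
  intro n
  induction n with
  | zero =>
    intro c d _ hsub _
    refine ⟨continuousOn_id, fun x hx => hsub hx, fun x _ y _ hxy => ?_⟩
    simp [abs_of_pos (sub_pos.mpr hxy)]
  | succ n IH =>
    intro c d hcd hsub havoid
    obtain ⟨hcont, hmaps, hexp⟩ := IH c d hcd hsub (fun k hk => havoid k (hk.trans n.lt_succ_self))
    set S := F.toFun^[n] '' Ioo c d with hSdef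
    have hScon : S.OrdConnected :=
      (((isPreconnected_Ioo (a := c) (b := d)).image _ hcont)).ordConnected
    have hSB : ∀ x ∈ S, x ∉ F.B := by
      rintro x ⟨z, hz, rfl⟩
      exact havoid n n.lt_succ_self z hz
    have hxS : F.toFun^[n] ((c + d) / 2) ∈ S :=
      ⟨_, ⟨by linarith, by linarith⟩, rfl⟩
    obtain ⟨j, hjS⟩ := one_piece F hScon (fun x hx => by
      obtain ⟨z, hz, rfl⟩ := hx; exact hmaps hz) hSB hxS
    have hEq : ∀ x ∈ Ioo c d, F.toFun^[n + 1] x = F.branch j (F.toFun^[n] x) := by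
      intro x hx
      rw [Function.iterate_succ_apply']
      exact F.branch_eq j (hjS ⟨x, hx, rfl⟩)
    refine ⟨?_, ?_, ?_⟩
    · refine ContinuousOn.congr (((F.branch_smooth j).continuous.comp_continuousOn hcont)) ?_
      intro x hx; exact hEq x hx
    · intro x hx
      rw [Function.iterate_succ_apply']
      exact F.mapsTo (hmaps hx)
    · intro x hx y hy hxy
      have hu : F.toFun^[n] x ∈ Ioo (F.a j.castSucc) (F.a j.succ) := hjS ⟨x, hx, rfl⟩
      have hv : F.toFun^[n] y ∈ Ioo (F.a j.castSucc) (F.a j.succ) := hjS ⟨y, hy, rfl⟩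
      have hlow : F.σ ^ n * (y - x) ≤ |F.toFun^[n] y - F.toFun^[n] x| := hexp x hx y hy hxy
      have hσ0 : (0:ℝ) < F.σ := lt_trans one_pos hσ1
      have hpos : (0:ℝ) < F.σ ^ n * (y - x) :=
        mul_pos (pow_pos hσ0 n) (sub_pos.mpr hxy)
      rw [hEq x hx, hEq y hy]
      rcases lt_trichotomy (F.toFun^[n] x) (F.toFun^[n] y) with h1 | h1 | h1
      · have := branch_exp F j (Ioo_subset_Icc_self hu) (Ioo_subset_Icc_self hv) h1
        have habs : |F.toFun^[n] y - F.toFun^[n] x| = F.toFun^[n] y - F.toFun^[n] x :=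
          abs_of_pos (sub_pos.mpr h1)
        calc F.σ ^ (n + 1) * (y - x) = F.σ * (F.σ ^ n * (y - x)) := by ring
          _ ≤ F.σ * (F.toFun^[n] y - F.toFun^[n] x) := by
              rw [habs] at hlow; exact mul_le_mul_of_nonneg_left hlow hσ0.le
          _ ≤ |F.branch j (F.toFun^[n] y) - F.branch j (F.toFun^[n] x)| := this
      · rw [h1] at hlow; simp at hlow; linarith
      · have := branch_exp F j (Ioo_subset_Icc_self hv) (Ioo_subset_Icc_self hu) h1
        have habs : |F.toFun^[n] y - F.toFun^[n] x| = F.toFun^[n] x - F.toFun^[n] y := by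
          rw [abs_sub_comm]; exact abs_of_pos (sub_pos.mpr h1)
        calc F.σ ^ (n + 1) * (y - x) = F.σ * (F.σ ^ n * (y - x)) := by ring
          _ ≤ F.σ * (F.toFun^[n] x - F.toFun^[n] y) := by
              rw [habs] at hlow; exact mul_le_mul_of_nonneg_left hlow hσ0.le
          _ ≤ |F.branch j (F.toFun^[n] x) - F.branch j (F.toFun^[n] y)| := this
          _ = |F.branch j (F.toFun^[n] y) - F.branch j (F.toFun^[n] x)| := abs_sub_comm _ _

/-- An open interval contains an open subinterval avoiding a given finite set. -/
lemma avoid_finite : ∀ (S : Set ℝ), S.Finite → ∀ c d : ℝ, c < d →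
    ∃ p q : ℝ, p < q ∧ Ioo p q ⊆ Ioo c d ∧ ∀ x ∈ Ioo p q, x ∉ S := by
  intro S hS
  refine Set.Finite.induction_on S hS
    (fun c d hcd => ⟨c, d, hcd, Subset.rfl, fun x _ => notMem_empty x⟩) ?_
  intro a s _ _ IH c d hcd
  exact by
    obtain ⟨p, q, hpq, hsub, havoid⟩ := IH c d hcd
    by_cases ha : a ∈ Ioo p q
    · exact ⟨p, a, ha.1, fun x hx => hsub ⟨hx.1, hx.2.trans ha.2⟩,
        fun x hx hmem => by
          rcases hmem with rfl | hmem
          · exact absurd hx.2 (lt_irrefl x)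
          · exact havoid x ⟨hx.1, hx.2.trans ha.2⟩ hmem⟩
    · exact ⟨p, q, hpq, hsub, fun x hx hmem => by
        rcases hmem with rfl | hmem
        · exact ha hx
        · exact havoid x hx hmem⟩

/-- for a piecewise expanding map with `σ > 2` and every nondegenerate
interval `I ⊆ [0,1]` there are `i ∈ ℕ` and a subinterval `W = (a,b) ⊆ I` with
`a, b ∈ f^{-i}(B)` such that `W ∩ f^{-k}(B) = ∅` for all `0 ≤ k ≤ i`. -/
theorem stmt2 {m : ℕ} (F : PWE m) (hσ : 2 < F.σ) (I : Set ℝ)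
    (hI : I ⊆ Icc 0 1) (hconn : I.OrdConnected) (hne : (interior I).Nonempty) :
    ∃ i : ℕ, ∃ a b : ℝ, a < b ∧ Ioo a b ⊆ I ∧
      F.toFun^[i] a ∈ F.B ∧ F.toFun^[i] b ∈ F.B ∧
      ∀ k ≤ i, Ioo a b ∩ F.toFun^[k] ⁻¹' F.B = ∅ := by
  by_contra hcon
  push_neg at hcon
  have hσ1 : 1 < F.σ := by linarith
  have hσ0 : (0:ℝ) < F.σ := by linarith
  obtain ⟨x0, hx0⟩ := hne
  obtain ⟨ε, hε, hball⟩ := Metric.isOpen_iff.mp isOpen_interior x0 hx0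
  rw [Real.ball_eq_Ioo] at hball
  obtain ⟨c1, d1, hc1d1, hsub1, havoid1⟩ :=
    avoid_finite F.B (Set.finite_range F.a) (x0 - ε) (x0 + ε) (by linarith)
  have hIsub : Ioo c1 d1 ⊆ I := fun z hz => interior_subset (hball (hsub1 hz))
  have hIcc : Ioo c1 d1 ⊆ Icc 0 1 := fun z hz => hI (hIsub hz)
  set L := d1 - c1 with hLdef
  have hL : 0 < L := sub_pos.mpr hc1d1
  have key : ∀ i : ℕ, ∃ c d : ℝ, c < d ∧ Ioo c d ⊆ Ioo c1 d1 ∧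
      (∀ k ≤ i, ∀ x ∈ Ioo c d, F.toFun^[k] x ∉ F.B) ∧ L / 2 ^ i ≤ d - c := by
    intro i
    induction i with
    | zero =>
      refine ⟨c1, d1, hc1d1, Subset.rfl, ?_, by simp [hLdef]⟩
      intro k hk x hx
      interval_cases k
      simpa using havoid1 x hx
    | succ i IH =>
      obtain ⟨c, d, hcd, hsub, hav, hlen⟩ := IH
      have hIcc' : Ioo c d ⊆ Icc 0 1 := fun z hz => hIcc (hsub hz)
      have hIsub' : Ioo c d ⊆ I := fun z hz => hIsub (hsub hz)
      set T := {x : ℝ | x ∈ Ioo c d ∧ F.toFun^[i + 1] x ∈ F.B} with hTdef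
      obtain ⟨-, -, hexp⟩ := iter_exp F hσ1 (i + 1) c d hcd hIcc'
        (fun k hk => hav k (Nat.lt_succ_iff.mp hk))
      have hppos : (0:ℝ) < F.σ ^ (i + 1) := pow_pos hσ0 _
      have hinj : InjOn (F.toFun^[i + 1]) (Ioo c d) := by
        intro x hx y hy hxy
        rcases lt_trichotomy x y with h | h | h
        · exfalso
          have h2 := hexp x hx y hy h
          rw [hxy] at h2; simp only [sub_self, abs_zero] at h2
          nlinarith
        · exact h
        · exfalso
          have h2 := hexp y hy x hx h
          rw [hxy] at h2; simp only [sub_self, abs_zero] at h2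
          nlinarith
      have hTfin : T.Finite := by
        apply Set.Finite.of_finite_image (f := F.toFun^[i + 1])
        · exact (Set.finite_range F.a).subset (by rintro _ ⟨x, hx, rfl⟩; exact hx.2)
        · exact hinj.mono fun x hx => hx.1
      by_cases hT2 : ∃ p ∈ T, ∃ q ∈ T, p ≠ q
      · exfalso
        obtain ⟨p, hp, q, hq, hpq⟩ := hT2
        have hpF : p ∈ hTfin.toFinset := hTfin.mem_toFinset.mpr hp
        have hqF : q ∈ hTfin.toFinset := hTfin.mem_toFinset.mpr hq
        have hne1 : hTfin.toFinset.Nonempty := ⟨p, hpF⟩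
        set P := hTfin.toFinset.min' hne1 with hPdef
        have hPF : P ∈ hTfin.toFinset := Finset.min'_mem _ _
        have hPT : P ∈ T := hTfin.mem_toFinset.mp hPF
        have hne2 : (hTfin.toFinset.erase P).Nonempty := by
          rcases ne_or_eq p P with h | h
          · exact ⟨p, Finset.mem_erase.mpr ⟨h, hpF⟩⟩
          · exact ⟨q, Finset.mem_erase.mpr ⟨by rw [← h]; exact hpq.symm, hqF⟩⟩
        set Q := (hTfin.toFinset.erase P).min' hne2 with hQdef
        have hQE : Q ∈ hTfin.toFinset.erase P := Finset.min'_mem _ _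
        have hQT : Q ∈ T := hTfin.mem_toFinset.mp (Finset.mem_of_mem_erase hQE)
        have hPQ : P < Q :=
          lt_of_le_of_ne (Finset.min'_le _ _ (Finset.mem_of_mem_erase hQE))
            (Ne.symm (Finset.mem_erase.mp hQE).1)
        have hgap : ∀ t ∈ Ioo P Q, t ∉ T := by
          intro t ht htT
          have htF : t ∈ hTfin.toFinset.erase P :=
            Finset.mem_erase.mpr ⟨ne_of_gt ht.1, hTfin.mem_toFinset.mpr htT⟩
          exact absurd (Finset.min'_le _ _ htF) (not_le.mpr ht.2)
        have hPQsub : Ioo P Q ⊆ Ioo c d := fun z hz =>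
          ⟨hPT.1.1.trans hz.1, hz.2.trans hQT.1.2⟩
        obtain ⟨k, hk, hne⟩ := hcon (i + 1) P Q hPQ (fun z hz => hIsub' (hPQsub hz))
          hPT.2 hQT.2
        obtain ⟨x, hx1, hx2⟩ := hne
        rcases Nat.lt_succ_iff_lt_or_eq.mp (Nat.lt_succ_of_le hk) with hk' | rfl
        · exact hav k (Nat.lt_succ_iff.mp hk') x (hPQsub hx1) hx2
        · exact hgap x hx1 ⟨hPQsub hx1, hx2⟩
      · push_neg at hT2
        have hstep : L / 2 ^ (i + 1) ≤ (d - c) / 2 := by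
          rw [pow_succ]
          rw [div_le_div_iff₀ (by positivity) (by norm_num)]
          rw [div_le_iff₀ (by positivity : (0:ℝ) < (2:ℝ) ^ i)] at hlen
          nlinarith
        by_cases hT0 : T.Nonempty
        · obtain ⟨p, hp⟩ := hT0
          have hTp : ∀ t ∈ T, t = p := fun t ht => hT2 t ht p hp
          have hnotT : ∀ x ∈ Ioo c d, x ≠ p → F.toFun^[i + 1] x ∉ F.B := by
            intro x hx hxp hB
            exact hxp (hTp x ⟨hx, hB⟩)
          by_cases hside : (d - c) / 2 ≤ d - p
          · refine ⟨p, d, hp.1.2, fun z hz => hsub ⟨hp.1.1.trans hz.1, hz.2⟩, ?_,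
              hstep.trans hside⟩
            intro k hk x hx
            have hx' : x ∈ Ioo c d := ⟨hp.1.1.trans hx.1, hx.2⟩
            rcases Nat.lt_succ_iff_lt_or_eq.mp (Nat.lt_succ_of_le hk) with hk' | rfl
            · exact hav k (Nat.lt_succ_iff.mp hk') x hx'
            · exact hnotT x hx' (ne_of_gt hx.1)
          · push_neg at hside
            refine ⟨c, p, hp.1.1, fun z hz => hsub ⟨hz.1, hz.2.trans hp.1.2⟩, ?_,
              hstep.trans (by linarith)⟩
            intro k hk x hx
            have hx' : x ∈ Ioo c d := ⟨hx.1, hx.2.trans hp.1.2⟩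
            rcases Nat.lt_succ_iff_lt_or_eq.mp (Nat.lt_succ_of_le hk) with hk' | rfl
            · exact hav k (Nat.lt_succ_iff.mp hk') x hx'
            · exact hnotT x hx' (ne_of_lt hx.2)
        · refine ⟨c, d, hcd, hsub, ?_, hstep.trans (by linarith)⟩
          intro k hk x hx
          rcases Nat.lt_succ_iff_lt_or_eq.mp (Nat.lt_succ_of_le hk) with hk' | rfl
          · exact hav k (Nat.lt_succ_iff.mp hk') x hx
          · exact fun hB => hT0 ⟨x, hx, hB⟩
  have hfinal : ∀ i : ℕ, L ≤ 2 * (2 / F.σ) ^ i := by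
    intro i
    obtain ⟨c, d, hcd, hsub, hav, hlen⟩ := key i
    obtain ⟨-, hmaps, hexp⟩ := iter_exp F hσ1 i c d hcd (fun z hz => hIcc (hsub hz))
      (fun k hk => hav k hk.le)
    set x := (3 * c + d) / 4 with hxdef
    set y := (c + 3 * d) / 4 with hydef
    have hx : x ∈ Ioo c d := ⟨by rw [hxdef]; linarith, by rw [hxdef]; linarith⟩
    have hy : y ∈ Ioo c d := ⟨by rw [hydef]; linarith, by rw [hydef]; linarith⟩
    have hxy : x < y := by rw [hxdef, hydef]; linarith
    have h1 := hexp x hx y hy hxy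
    have hb1 := hmaps hx
    have hb2 := hmaps hy
    have habs : |F.toFun^[i] y - F.toFun^[i] x| ≤ 1 := by
      rw [abs_le]
      constructor
      · linarith [hb1.2, hb2.1]
      · linarith [hb1.1, hb2.2]
    have hyx : y - x = (d - c) / 2 := by rw [hxdef, hydef]; ring
    have h2 : F.σ ^ i * ((d - c) / 2) ≤ 1 := by rw [← hyx]; linarith
    have p1 : (0:ℝ) < F.σ ^ i := pow_pos hσ0 i
    have p2 : (0:ℝ) < (2:ℝ) ^ i := by positivity
    rw [div_pow]
    have h3 : L ≤ (d - c) * 2 ^ i := by rw [div_le_iff₀ p2] at hlen; exact hlen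
    calc L ≤ (d - c) * 2 ^ i := h3
      _ ≤ (2 / F.σ ^ i) * 2 ^ i := by
          apply mul_le_mul_of_nonneg_right _ p2.le
          rw [le_div_iff₀ p1]; nlinarith
      _ = 2 * ((2:ℝ) ^ i / F.σ ^ i) := by ring
  have hlt : 2 / F.σ < 1 := by rw [div_lt_one hσ0]; linarith
  have h0 : Tendsto (fun i : ℕ => (2 / F.σ) ^ i) atTop (nhds 0) :=
    tendsto_pow_atTop_nhds_zero_of_lt_one (by positivity) hlt
  obtain ⟨i, hi⟩ := (h0.eventually (gt_mem_nhds (show (0:ℝ) < L / 2 by linarith))).exists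
  have := hfinal i
  linarith
end

section
/- Let f be a piecewise expanding map with partition discontinuity set D, and let I ⊆ [0,1] be an open interval. Define ω_0(I) = I, ω_{n+1}(I) = f(ω_n(I) \ D), and Ω_n(I) = ω_0(I) ∪ ⋯ ∪ ω_n(I). Then there exist δ > 0 and N > 0 such that for all n ≥ N, every connected component of Ω_n(I) has length at least δ. -/
open Set MeasureTheory Filter Function
open scoped ENNReal

namespace Stmt4Aux

/-- finite unions of open intervals -/
def FU (s : Set ℝ) : Prop := ∃ S : Finset (ℝ × ℝ), s = ⋃ p ∈ S, Ioo p.1 p.2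

lemma FU_empty : FU (∅ : Set ℝ) := ⟨∅, by simp⟩

lemma FU_Ioo (a b : ℝ) : FU (Ioo a b) := ⟨{(a, b)}, by simp⟩

lemma FU_union {s t : Set ℝ} (hs : FU s) (ht : FU t) : FU (s ∪ t) := by
  obtain ⟨S, rfl⟩ := hs; obtain ⟨T, rfl⟩ := ht
  exact ⟨S ∪ T, by rw [Finset.set_biUnion_union]⟩

lemma FU_finsetUnion {α : Type*} (T : Finset α) (G : α → Set ℝ)
    (h : ∀ t ∈ T, FU (G t)) : FU (⋃ t ∈ T, G t) := by
  classical
  induction T using Finset.induction_on with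
  | empty => simpa using FU_empty
  | insert _ _ hnot ih =>
    rw [Finset.set_biUnion_insert]
    exact FU_union (h _ (Finset.mem_insert_self _ _))
      (ih fun t ht => h t (Finset.mem_insert_of_mem ht))

lemma FU_diff_singleton {s : Set ℝ} (hs : FU s) (a : ℝ) : FU (s \ {a}) := by
  obtain ⟨S, rfl⟩ := hs
  have : (⋃ p ∈ S, Ioo p.1 p.2) \ {a} = ⋃ p ∈ S, (Ioo p.1 p.2 \ {a}) := by
    ext x; simp only [mem_diff, mem_iUnion, exists_prop, mem_singleton_iff]; tauto
  rw [this]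
  refine FU_finsetUnion S _ fun p _ => ?_
  by_cases ha : a ∈ Ioo p.1 p.2
  · have : Ioo p.1 p.2 \ {a} = Ioo p.1 a ∪ Ioo a p.2 := by
      ext x
      simp only [mem_diff, mem_Ioo, mem_singleton_iff, mem_union]
      constructor
      · rintro ⟨⟨h1, h2⟩, h3⟩
        rcases lt_or_gt_of_ne h3 with h | h
        · exact Or.inl ⟨h1, h⟩
        · exact Or.inr ⟨h, h2⟩
      · rintro (⟨h1, h2⟩ | ⟨h1, h2⟩)
        · exact ⟨⟨h1, h2.trans ha.2⟩, h2.ne⟩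
        · exact ⟨⟨ha.1.trans h1, h2⟩, h1.ne'⟩
    rw [this]; exact FU_union (FU_Ioo _ _) (FU_Ioo _ _)
  · rw [diff_singleton_eq_self ha]; exact FU_Ioo _ _

lemma FU_diff_finite {s t : Set ℝ} (hs : FU s) (ht : t.Finite) : FU (s \ t) := by
  classical
  refine Set.Finite.induction_on (motive := fun t _ => FU (s \ t)) t ht (by simpa using hs) ?_
  intro a u _ _ ih
  have : s \ insert a u = (s \ u) \ {a} := by
    ext x; simp only [mem_diff, mem_insert_iff, mem_singleton_iff]; tauto
  rw [this]; exact FU_diff_singleton ih a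

lemma FU_subset_Ioo01 {s : Set ℝ} (hs : FU s) (h : s ⊆ Icc 0 1) : s ⊆ Ioo 0 1 := by
  obtain ⟨S, rfl⟩ := hs
  intro x hx
  rw [mem_iUnion₂] at hx
  obtain ⟨p, hp, hx⟩ := hx
  have hsub : Ioo p.1 p.2 ⊆ Icc (0:ℝ) 1 := fun z hz => h (mem_biUnion hp hz)
  have h1 : ((p.1 + x) / 2 : ℝ) ∈ Ioo p.1 p.2 := ⟨by linarith [hx.1], by linarith [hx.1, hx.2]⟩
  have h2 : ((x + p.2) / 2 : ℝ) ∈ Ioo p.1 p.2 := ⟨by linarith [hx.1, hx.2], by linarith [hx.2]⟩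
  have := hsub h1
  have := hsub h2
  constructor
  · have : (0:ℝ) ≤ (p.1 + x) / 2 := (hsub h1).1
    linarith [hx.1]
  · have : ((x + p.2) / 2 : ℝ) ≤ 1 := (hsub h2).2
    linarith [hx.2]

/-- a generic "finite min" lemma -/
lemma finmin {α : Type*} (s : Finset α) (P : α → ℝ → Prop)
    (hmono : ∀ a r r', 0 < r' → r' ≤ r → P a r → P a r')
    (h : ∀ a ∈ s, ∃ r > 0, P a r) : ∃ r > 0, ∀ a ∈ s, P a r := by
  classical
  induction s using Finset.induction_on with
  | empty => exact ⟨1, one_pos, by simp⟩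
  | @insert a u _ ih =>
    obtain ⟨r₁, hr₁, hP₁⟩ := h a (Finset.mem_insert_self _ _)
    obtain ⟨r₂, hr₂, hP₂⟩ := ih fun b hb => h b (Finset.mem_insert_of_mem hb)
    refine ⟨min r₁ r₂, lt_min hr₁ hr₂, ?_⟩
    intro b hb
    rcases Finset.mem_insert.mp hb with rfl | hb
    · exact hmono b r₁ _ (lt_min hr₁ hr₂) (min_le_left _ _) hP₁
    · exact hmono b r₂ _ (lt_min hr₁ hr₂) (min_le_right _ _) (hP₂ b hb)

end Stmt4Aux

namespace Stmt4Aux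

variable {m : ℕ} (F : PWE m)

lemma D_finite : F.D.Finite :=
  (Set.finite_range F.a).subset (by rintro x ⟨i, -, -, rfl⟩; exact ⟨i, rfl⟩)

lemma partition_mem_D {j : Fin (m + 1)} (hj : F.a j ∈ Ioo (0:ℝ) 1) : F.a j ∈ F.D := by
  refine ⟨j, ?_, ?_, rfl⟩
  · rintro rfl; rw [F.ha0] at hj; exact lt_irrefl 0 hj.1
  · rintro rfl; rw [F.ha1] at hj; exact lt_irrefl 1 hj.2

lemma piece_pt {x : ℝ} (hx : x ∈ Ioo (0:ℝ) 1) (hxD : x ∉ F.D) :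
    ∃ i : Fin m, x ∈ Ioo (F.a i.castSucc) (F.a i.succ) := by
  obtain ⟨i, hi, -⟩ := F.branch_cover x (Ioo_subset_Icc_self hx)
  refine ⟨i, lt_of_le_of_ne hi.1 ?_, lt_of_le_of_ne hi.2 ?_⟩
  · intro h; exact hxD (h ▸ partition_mem_D F (h ▸ hx))
  · intro h; exact hxD (h.symm ▸ partition_mem_D F (h.symm ▸ hx))

lemma piece_Ioo {c d : ℝ} (hcd : c < d) (hsub : Ioo c d ⊆ Ioo (0:ℝ) 1)
    (hD : ∀ b ∈ F.D, b ∉ Ioo c d) :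
    ∃ i : Fin m, Ioo c d ⊆ Ioo (F.a i.castSucc) (F.a i.succ) := by
  have hy : (c + d) / 2 ∈ Ioo c d := ⟨by linarith, by linarith⟩
  obtain ⟨i, hi⟩ := piece_pt F (hsub hy) (fun h => hD _ h hy)
  refine ⟨i, fun z hz => ?_⟩
  set y := (c + d) / 2
  have key : ∀ w, w ∈ Ioo c d → w ∉ Ioo c d → False := fun w h h' => h' h
  constructor
  · by_contra h
    push_neg at h
    -- z ≤ a i.castSucc < y, so a i.castSucc ∈ Ioo c d
    have hmem : F.a i.castSucc ∈ Ioo c d := ⟨lt_of_lt_of_le hz.1 h, hi.1.trans hy.2⟩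
    exact hD _ (partition_mem_D F (hsub hmem)) hmem
  · by_contra h
    push_neg at h
    have hmem : F.a i.succ ∈ Ioo c d := ⟨hy.1.trans hi.2, lt_of_le_of_lt h hz.2⟩
    exact hD _ (partition_mem_D F (hsub hmem)) hmem

lemma branch_mono (i : Fin m) :
    StrictMonoOn (F.branch i) (Icc (F.a i.castSucc) (F.a i.succ)) ∨
    StrictAntiOn (F.branch i) (Icc (F.a i.castSucc) (F.a i.succ)) := by
  set g := F.branch i with hg_def
  set P := Icc (F.a i.castSucc) (F.a i.succ) with hP_def
  have hg : Continuous g := (F.branch_smooth i).continuous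
  have hg' : Continuous (deriv g) := (F.branch_smooth i).continuous_deriv le_rfl
  have hσ0 : (0:ℝ) < F.σ := lt_trans one_pos F.hσ
  have hne : ∀ x ∈ P, deriv g x ≠ 0 := by
    intro x hx h0
    have := F.branch_expand i x hx
    rw [h0] at this; simp at this; linarith
  by_cases hpos : ∀ x ∈ P, 0 < deriv g x
  · exact Or.inl (strictMonoOn_of_deriv_pos (convex_Icc _ _) hg.continuousOn
      fun x hx => hpos x (interior_subset hx))
  · push_neg at hpos
    obtain ⟨x, hxP, hx⟩ := hpos
    have hxneg : deriv g x < 0 := lt_of_le_of_ne hx (hne x hxP)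
    have hneg : ∀ y ∈ P, deriv g y < 0 := by
      intro y hyP
      by_contra h
      push_neg at h
      have hypos : 0 < deriv g y := lt_of_le_of_ne h (Ne.symm (hne y hyP))
      have h0 : (0:ℝ) ∈ uIcc (deriv g x) (deriv g y) := by
        rw [mem_uIcc]; left; exact ⟨hxneg.le, hypos.le⟩
      obtain ⟨z, hz, hz0⟩ := intermediate_value_uIcc (hg'.continuousOn (s := uIcc x y)) h0
      exact hne z (Set.ordConnected_Icc.uIcc_subset hxP hyP hz) hz0
    exact Or.inr (strictAntiOn_of_deriv_neg (convex_Icc _ _) hg.continuousOn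
      fun x hx => hneg x (interior_subset hx))

lemma branch_mvt (i : Fin m) {u v : ℝ}
    (hu : u ∈ Icc (F.a i.castSucc) (F.a i.succ)) (hv : v ∈ Icc (F.a i.castSucc) (F.a i.succ))
    (huv : u < v) : F.σ * (v - u) ≤ |F.branch i v - F.branch i u| := by
  set g := F.branch i
  have hg : Continuous g := (F.branch_smooth i).continuous
  have hdiff : Differentiable ℝ g := (F.branch_smooth i).differentiable one_ne_zero
  obtain ⟨ξ, hξ, hs⟩ := exists_deriv_eq_slope g huv hg.continuousOn hdiff.differentiableOn
  have hξP : ξ ∈ Icc (F.a i.castSucc) (F.a i.succ) :=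
    ⟨hu.1.trans hξ.1.le, hξ.2.le.trans hv.2⟩
  have hexp := F.branch_expand i ξ hξP
  rw [hs, abs_div, abs_of_pos (by linarith : (0:ℝ) < v - u)] at hexp
  calc F.σ * (v - u) ≤ |g v - g u| / (v - u) * (v - u) := by
        apply mul_le_mul_of_nonneg_right hexp (by linarith)
    _ = |g v - g u| := div_mul_cancel₀ _ (by linarith)

lemma branch_img (i : Fin m) {c d : ℝ} (hcd : c < d)
    (hsub : Ioo c d ⊆ Ioo (F.a i.castSucc) (F.a i.succ)) :
    ∃ e₁ e₂ : ℝ, F.toFun '' Ioo c d = Ioo e₁ e₂ ∧ F.σ * (d - c) ≤ e₂ - e₁ := by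
  set g := F.branch i with hgdef
  have hg : Continuous g := (F.branch_smooth i).continuous
  have hmid : (c + d) / 2 ∈ Ioo c d := ⟨by linarith, by linarith⟩
  have hc : F.a i.castSucc ≤ c := by
    by_contra h
    push_neg at h
    have h2 : F.a i.castSucc < d := (hsub hmid).1.trans hmid.2
    have : (c + F.a i.castSucc) / 2 ∈ Ioo c d := ⟨by linarith, by linarith⟩
    have := (hsub this).1
    linarith
  have hd : d ≤ F.a i.succ := by
    by_contra h
    push_neg at h
    have h2 : c < F.a i.succ := hmid.1.trans (hsub hmid).2
    have : (F.a i.succ + d) / 2 ∈ Ioo c d := ⟨by linarith, by linarith⟩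
    have := (hsub this).2
    linarith
  have hcP : c ∈ Icc (F.a i.castSucc) (F.a i.succ) := ⟨hc, hcd.le.trans hd⟩
  have hdP : d ∈ Icc (F.a i.castSucc) (F.a i.succ) := ⟨hc.trans hcd.le, hd⟩
  have hPsub : Ioo c d ⊆ Icc (F.a i.castSucc) (F.a i.succ) :=
    fun z hz => ⟨hc.trans hz.1.le, hz.2.le.trans hd⟩
  have heq : F.toFun '' Ioo c d = g '' Ioo c d := Set.EqOn.image_eq ((F.branch_eq i).mono hsub)
  have hlen := branch_mvt F i hcP hdP hcd
  rcases branch_mono F i with hmono | hanti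
  · refine ⟨g c, g d, ?_, ?_⟩
    · rw [heq]
      apply Subset.antisymm
      · rintro z ⟨w, hw, rfl⟩
        exact ⟨hmono hcP (hPsub hw) hw.1, hmono (hPsub hw) hdP hw.2⟩
      · exact intermediate_value_Ioo hcd.le hg.continuousOn
    · have : g c < g d := hmono hcP hdP hcd
      rw [abs_of_pos (by linarith)] at hlen
      linarith
  · refine ⟨g d, g c, ?_, ?_⟩
    · rw [heq]
      apply Subset.antisymm
      · rintro z ⟨w, hw, rfl⟩
        exact ⟨hanti (hPsub hw) hdP hw.2, hanti hcP (hPsub hw) hw.1⟩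
      · exact intermediate_value_Ioo' hcd.le hg.continuousOn
    · have : g d < g c := hanti hcP hdP hcd
      rw [abs_of_neg (by linarith)] at hlen
      linarith

end Stmt4Aux

namespace Stmt4Aux

variable {m : ℕ} (F : PWE m) (I : Set ℝ)

lemma omega_subset_Icc (hI : I ⊆ Icc 0 1) : ∀ n, omegaSet F I n ⊆ Icc 0 1 := by
  intro n
  induction n with
  | zero => exact hI
  | succ n ih =>
    rintro z ⟨y, ⟨hy, -⟩, rfl⟩
    exact F.mapsTo (ih hy)

lemma FU_I (hI : I ⊆ Icc 0 1) (hIopen : IsOpen I) (hconn : I.OrdConnected) : FU I := by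
  rcases eq_empty_or_nonempty I with rfl | hne
  · exact FU_empty
  have hbdd : BddBelow I ∧ BddAbove I :=
    ⟨⟨0, fun x hx => (hI hx).1⟩, ⟨1, fun x hx => (hI hx).2⟩⟩
  have : I = Ioo (sInf I) (sSup I) := by
    apply Subset.antisymm
    · intro x hx
      obtain ⟨ε, hε, hball⟩ := Metric.isOpen_iff.mp hIopen x hx
      have hx1 : x - ε / 2 ∈ I := by
        apply hball
        rw [Metric.mem_ball, Real.dist_eq, abs_of_nonpos (by linarith)]
        linarith
      have hx2 : x + ε / 2 ∈ I := by
        apply hball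
        rw [Metric.mem_ball, Real.dist_eq, abs_of_nonneg (by linarith)]
        linarith
      exact ⟨lt_of_le_of_lt (csInf_le hbdd.1 hx1) (by linarith),
        lt_of_lt_of_le (by linarith : x < x + ε / 2) (le_csSup hbdd.2 hx2)⟩
    · intro z hz
      obtain ⟨x, hxI, hxz⟩ := exists_lt_of_csInf_lt hne hz.1
      obtain ⟨y, hyI, hzy⟩ := exists_lt_of_lt_csSup hne hz.2
      exact hconn.out hxI hyI ⟨hxz.le, hzy.le⟩
  rw [this]; exact FU_Ioo _ _

lemma FU_image {s : Set ℝ} (hs : FU s) (hsub : s ⊆ Ioo 0 1)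
    (hD : ∀ b ∈ F.D, b ∉ s) : FU (F.toFun '' s) := by
  obtain ⟨S, rfl⟩ := hs
  rw [image_iUnion₂]
  refine FU_finsetUnion S _ fun p hp => ?_
  rcases lt_or_ge p.1 p.2 with h | h
  · have hmem : Ioo p.1 p.2 ⊆ ⋃ q ∈ S, Ioo q.1 q.2 := fun z hz => mem_biUnion hp hz
    obtain ⟨i, hi⟩ := piece_Ioo F h (fun z hz => hsub (hmem hz))
      (fun b hb hbmem => hD b hb (hmem hbmem))
    obtain ⟨e₁, e₂, himg, -⟩ := branch_img F i h hi
    rw [himg]; exact FU_Ioo _ _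
  · rw [Ioo_eq_empty (not_lt.mpr h)]
    simpa using FU_empty

lemma FU_omega (hI : I ⊆ Icc 0 1) (hIopen : IsOpen I) (hconn : I.OrdConnected) :
    ∀ n, FU (omegaSet F I n) := by
  intro n
  induction n with
  | zero => exact FU_I I hI hIopen hconn
  | succ n ih =>
    show FU (F.toFun '' (omegaSet F I n \ F.D))
    have h1 : FU (omegaSet F I n \ F.D) := FU_diff_finite ih (D_finite F)
    have h2 : omegaSet F I n \ F.D ⊆ Ioo 0 1 := fun z hz =>
      FU_subset_Ioo01 ih (omega_subset_Icc F I hI n) hz.1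
    exact FU_image F h1 h2 (fun b hb hbmem => hbmem.2 hb)

lemma OmegaN_succ (n : ℕ) :
    OmegaN F I (n + 1) = OmegaN F I n ∪ omegaSet F I (n + 1) := by
  unfold OmegaN
  rw [Finset.range_add_one (n := n + 1), Finset.set_biUnion_insert, union_comm]

lemma OmegaN_zero : OmegaN F I 0 = I := by
  unfold OmegaN
  rw [Finset.range_one, Finset.set_biUnion_singleton]
  rfl

lemma omega_subset_OmegaN {k n : ℕ} (h : k ≤ n) : omegaSet F I k ⊆ OmegaN F I n :=
  subset_biUnion_of_mem (Finset.mem_range.mpr (Nat.lt_succ_of_le h))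

lemma OmegaN_mono {n n' : ℕ} (h : n ≤ n') : OmegaN F I n ⊆ OmegaN F I n' := by
  intro x hx
  rw [OmegaN, mem_iUnion₂] at hx
  obtain ⟨k, hk, hx⟩ := hx
  exact omega_subset_OmegaN F I (le_trans (Nat.lt_succ_iff.mp (Finset.mem_range.mp hk)) h) hx

lemma FU_OmegaN (hI : I ⊆ Icc 0 1) (hIopen : IsOpen I) (hconn : I.OrdConnected) (n : ℕ) :
    FU (OmegaN F I n) := by
  induction n with
  | zero => rw [OmegaN_zero]; exact FU_I I hI hIopen hconn
  | succ n ih =>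
    rw [OmegaN_succ]
    exact FU_union ih (FU_omega F I hI hIopen hconn (n + 1))

lemma OmegaN_subset_Icc (hI : I ⊆ Icc 0 1) (n : ℕ) : OmegaN F I n ⊆ Icc 0 1 := by
  intro x hx
  rw [OmegaN, mem_iUnion₂] at hx
  obtain ⟨k, -, hx⟩ := hx
  exact omega_subset_Icc F I hI k hx

lemma image_diff_subset (n : ℕ) :
    F.toFun '' (OmegaN F I n \ F.D) ⊆ OmegaN F I (n + 1) := by
  rintro z ⟨y, ⟨hy, hyD⟩, rfl⟩
  rw [OmegaN, mem_iUnion₂] at hy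
  obtain ⟨k, hk, hy⟩ := hy
  have : F.toFun y ∈ omegaSet F I (k + 1) := ⟨y, ⟨hy, hyD⟩, rfl⟩
  exact omega_subset_OmegaN F I
    (Nat.succ_le_succ (Nat.lt_succ_iff.mp (Finset.mem_range.mp hk))) this

lemma OmegaN_subset_OmegaInf (n : ℕ) : OmegaN F I n ⊆ OmegaInf F I := by
  intro x hx
  rw [OmegaN, mem_iUnion₂] at hx
  obtain ⟨k, -, hx⟩ := hx
  exact mem_iUnion.mpr ⟨k, hx⟩

lemma I_subset_OmegaN (n : ℕ) : I ⊆ OmegaN F I n := omega_subset_OmegaN F I (Nat.zero_le n)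

end Stmt4Aux

namespace Stmt4Aux

lemma findN {α : Type*} (s : Finset α) (Q : α → ℕ → Prop)
    (hmono : ∀ a n n', n ≤ n' → Q a n → Q a n')
    (h : ∀ a ∈ s, ∃ n, Q a n) : ∃ N, ∀ a ∈ s, Q a N := by
  classical
  induction s using Finset.induction_on with
  | empty => exact ⟨0, by simp⟩
  | @insert a u _ ih =>
    obtain ⟨n₁, hn₁⟩ := h a (Finset.mem_insert_self _ _)
    obtain ⟨n₂, hn₂⟩ := ih fun b hb => h b (Finset.mem_insert_of_mem hb)
    refine ⟨max n₁ n₂, fun b hb => ?_⟩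
    rcases Finset.mem_insert.mp hb with rfl | hb
    · exact hmono b n₁ _ (le_max_left _ _) hn₁
    · exact hmono b n₂ _ (le_max_right _ _) (hn₂ b hb)

end Stmt4Aux


open Stmt4Aux

/-- there exist `δ > 0` and `N > 0` such that for all `n ≥ N`, every
connected component of `Ω_n(I)` has length at least `δ`. -/


theorem stmt4 {m : ℕ} (F : PWE m) (I : Set ℝ)
    (hI : I ⊆ Icc 0 1) (hIopen : IsOpen I) (hconn : I.OrdConnected) :
    ∃ δ : ℝ, 0 < δ ∧ ∃ N : ℕ, 0 < N ∧ ∀ n ≥ N, ∀ x ∈ OmegaN F I n,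
      ENNReal.ofReal δ ≤ volume (connectedComponentIn (OmegaN F I n) x) := by
  classical
  rcases eq_empty_or_nonempty I with rfl | hIne
  · refine ⟨1, one_pos, 1, one_pos, fun n _ x hx => absurd hx ?_⟩
    have hempty : ∀ k, omegaSet F (∅ : Set ℝ) k = (∅ : Set ℝ) := by
      intro k
      induction k with
      | zero => rfl
      | succ k ih => show F.toFun '' _ = ∅; rw [ih]; simp
    intro hx
    rw [OmegaN, mem_iUnion₂] at hx
    obtain ⟨k, -, hx⟩ := hx
    rw [hempty k] at hx
    exact hx
  have hσ1 : 1 < F.σ := F.hσ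
  have hσ0 : (0:ℝ) < F.σ := by linarith
  set E := F.D ∩ OmegaInf F I with hE_def
  have hEfin : E.Finite := (D_finite F).inter_of_left _
  obtain ⟨N₀, hN₀⟩ := findN hEfin.toFinset (fun a n => a ∈ OmegaN F I n)
    (fun a n n' h ha => OmegaN_mono F I h ha)
    (by
      intro a ha
      rw [Set.Finite.mem_toFinset] at ha
      obtain ⟨k, hk⟩ := mem_iUnion.mp ha.2
      exact ⟨k, omega_subset_OmegaN F I le_rfl hk⟩)
  set N := N₀ + 1 with hN_def
  have hNpos : 0 < N := Nat.succ_pos _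
  have hEc : ∀ a ∈ hEfin.toFinset, a ∈ OmegaN F I N :=
    fun a ha => OmegaN_mono F I (Nat.le_succ _) (hN₀ a ha)
  -- structure of Ω_N
  obtain ⟨S, hS⟩ := FU_OmegaN F I hI hIopen hconn N
  set Sp := S.filter (fun p => p.1 < p.2) with hSp_def
  have hSpne : Sp.Nonempty := by
    obtain ⟨x, hx⟩ := hIne
    have hxΩ : x ∈ OmegaN F I N := I_subset_OmegaN F I N hx
    rw [hS, mem_iUnion₂] at hxΩ
    obtain ⟨p, hp, hxp⟩ := hxΩ
    exact ⟨p, Finset.mem_filter.mpr ⟨hp, hxp.1.trans hxp.2⟩⟩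
  set δb := Sp.inf' hSpne (fun p => p.2 - p.1) with hδb_def
  have hδbpos : 0 < δb := by
    rw [hδb_def, Finset.lt_inf'_iff]
    intro p hp
    have := (Finset.mem_filter.mp hp).2
    linarith
  -- the τ for discontinuity points in E
  obtain ⟨τ, hτpos, hτ⟩ : ∃ τ > 0, ∀ a ∈ hEfin.toFinset,
      (Ioo (a - τ) (a + τ) ⊆ OmegaN F I N ∧
        ∀ b ∈ F.D, b ∈ Ioo (a - τ) (a + τ) → b = a) := by
    apply finmin
    · rintro a r r' hr' hle ⟨h1, h2⟩
      have hsub : Ioo (a - r') (a + r') ⊆ Ioo (a - r) (a + r) :=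
        Ioo_subset_Ioo (by linarith) (by linarith)
      exact ⟨hsub.trans h1, fun b hb hbmem => h2 b hb (hsub hbmem)⟩
    · intro a ha
      have haΩ : a ∈ OmegaN F I N := hEc a ha
      rw [hS, mem_iUnion₂] at haΩ
      obtain ⟨p, hp, hap⟩ := haΩ
      obtain ⟨t₂, ht₂pos, ht₂⟩ : ∃ t₂ > 0, ∀ b ∈ (D_finite F).toFinset,
          (b ∈ Ioo (a - t₂) (a + t₂) → b = a) := by
        apply finmin
        · intro b r r' hr' hle hP hmem
          exact hP (Ioo_subset_Ioo (by linarith) (by linarith) hmem)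
        · intro b hb
          by_cases hba : b = a
          · exact ⟨1, one_pos, fun _ => hba⟩
          · refine ⟨|b - a|, abs_pos.mpr (sub_ne_zero.mpr hba), fun hmem => ?_⟩
            exfalso
            have : |b - a| < |b - a| := abs_sub_lt_iff.mpr
              ⟨by linarith [hmem.2], by linarith [hmem.1]⟩
            exact lt_irrefl _ this
      refine ⟨min (min (a - p.1) (p.2 - a)) t₂, ?_, ?_, ?_⟩
      · exact lt_min (lt_min (by linarith [hap.1]) (by linarith [hap.2])) ht₂pos
      · intro z hz
        have hz1 : p.1 < z := by
          have h := hz.1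
          have := min_le_left (min (a - p.1) (p.2 - a)) t₂
          have := min_le_left (a - p.1) (p.2 - a)
          linarith
        have hz2 : z < p.2 := by
          have h := hz.2
          have := min_le_left (min (a - p.1) (p.2 - a)) t₂
          have := min_le_right (a - p.1) (p.2 - a)
          linarith
        rw [hS]
        exact mem_biUnion hp ⟨hz1, hz2⟩
      · intro b hb hbmem
        apply ht₂ b ((D_finite F).mem_toFinset.mpr hb)
        have := min_le_right (min (a - p.1) (p.2 - a)) t₂
        exact ⟨by linarith [hbmem.1], by linarith [hbmem.2]⟩
  set β := min δb τ with hβ_def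
  have hβpos : 0 < β := lt_min hδbpos hτpos
  -- key induction
  have key : ∀ n, N ≤ n → ∀ x ∈ OmegaN F I n, ∃ c d : ℝ, c < d ∧ β ≤ d - c ∧
      x ∈ Ioo c d ∧ Ioo c d ⊆ OmegaN F I n := by
    intro n hn
    induction n, hn using Nat.le_induction with
    | base =>
      intro x hx
      rw [hS, mem_iUnion₂] at hx
      obtain ⟨p, hp, hxp⟩ := hx
      have hpSp : p ∈ Sp := Finset.mem_filter.mpr ⟨hp, hxp.1.trans hxp.2⟩
      refine ⟨p.1, p.2, hxp.1.trans hxp.2, ?_, hxp, ?_⟩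
      · exact le_trans (min_le_left _ _) (Finset.inf'_le _ hpSp)
      · intro z hz; rw [hS]; exact mem_biUnion hp hz
    | succ n hn ih =>
      intro x hx
      rw [OmegaN_succ, mem_union] at hx
      rcases hx with hx | hx
      · obtain ⟨c, d, hcd, hlen, hxm, hsub⟩ := ih x hx
        exact ⟨c, d, hcd, hlen, hxm, hsub.trans (OmegaN_mono F I (Nat.le_succ n))⟩
      · simp only [omegaSet] at hx
        obtain ⟨y, ⟨hyω, hyD⟩, rfl⟩ := hx
        have hyΩ : y ∈ OmegaN F I n := omega_subset_OmegaN F I le_rfl hyω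
        obtain ⟨c, d, hcd, hlen, hym, hsub⟩ := ih y hyΩ
        set Dfin := (D_finite F).toFinset with hDfin_def
        set Lc := Dfin.filter (fun b => b ∈ Ioo c y) with hLc_def
        set Lr := Dfin.filter (fun b => b ∈ Ioo y d) with hLr_def
        have hLcD : ∀ b ∈ F.D, b ∈ Ioo c y → b ∈ Lc :=
          fun b hb hmem => Finset.mem_filter.mpr ⟨(D_finite F).mem_toFinset.mpr hb, hmem⟩
        have hLrD : ∀ b ∈ F.D, b ∈ Ioo y d → b ∈ Lr :=
          fun b hb hmem => Finset.mem_filter.mpr ⟨(D_finite F).mem_toFinset.mpr hb, hmem⟩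
        -- construct the tube J = Ioo u v around y avoiding D and inside Ω_n
        have hJ : ∃ u v : ℝ, u < v ∧ β ≤ v - u ∧ y ∈ Ioo u v ∧
            Ioo u v ⊆ OmegaN F I n ∧ ∀ b ∈ F.D, b ∉ Ioo u v := by
          by_cases hLc : Lc.Nonempty
          · -- cut on the left at a
            set a := Lc.max' hLc with ha_def
            have haLc : a ∈ Lc := Lc.max'_mem hLc
            have haD : a ∈ F.D := (D_finite F).mem_toFinset.mp (Finset.mem_filter.mp haLc).1
            have haIoo : a ∈ Ioo c y := (Finset.mem_filter.mp haLc).2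
            have haE : a ∈ hEfin.toFinset := by
              rw [Set.Finite.mem_toFinset]
              exact ⟨haD, OmegaN_subset_OmegaInf F I n
                (hsub ⟨haIoo.1, haIoo.2.trans hym.2⟩)⟩
            obtain ⟨hball, hsep⟩ := hτ a haE
            set d' := if h : Lr.Nonempty then Lr.min' h else d with hd'_def
            have hyd' : y < d' := by
              rw [hd'_def]
              split_ifs with h
              · exact (Finset.mem_filter.mp (Lr.min'_mem h)).2.1
              · exact hym.2
            have hd'd : d' ≤ d := by
              rw [hd'_def]
              split_ifs with h
              · exact ((Finset.mem_filter.mp (Lr.min'_mem h)).2.2).le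
              · exact le_rfl
            have hDright : ∀ b ∈ F.D, b ∉ Ioo y d' := by
              intro b hb hmem
              have hbLr : b ∈ Lr := hLrD b hb ⟨hmem.1, lt_of_lt_of_le hmem.2 hd'd⟩
              have hne : Lr.Nonempty := ⟨b, hbLr⟩
              have : d' ≤ b := by rw [hd'_def, dif_pos hne]; exact Lr.min'_le b hbLr
              exact absurd hmem.2 (not_lt.mpr this)
            have hDleft : ∀ b ∈ F.D, b ∉ Ioo a y := by
              intro b hb hmem
              have hbLc : b ∈ Lc := hLcD b hb ⟨haIoo.1.trans hmem.1, hmem.2⟩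
              have : b ≤ a := Lc.le_max' b hbLc
              exact absurd hmem.1 (not_lt.mpr this)
            refine ⟨a, max d' (a + τ), ?_, ?_, ⟨haIoo.2, lt_of_lt_of_le hyd' (le_max_left _ _)⟩,
              ?_, ?_⟩
            · exact lt_of_lt_of_le (haIoo.2.trans hyd') (le_max_left _ _)
            · have : a + τ ≤ max d' (a + τ) := le_max_right _ _
              have : τ ≤ max d' (a + τ) - a := by linarith
              exact le_trans (min_le_right δb τ) this
            · intro z hz
              rcases lt_max_iff.mp hz.2 with h | h
              · exact hsub ⟨haIoo.1.trans hz.1, lt_of_lt_of_le h hd'd⟩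
              · exact OmegaN_mono F I hn (hball ⟨by linarith [hz.1], h⟩)
            · intro b hb hmem
              rcases lt_max_iff.mp hmem.2 with h | h
              · rcases lt_trichotomy b y with hby | hby | hby
                · exact hDleft b hb ⟨hmem.1, hby⟩
                · exact hyD (hby ▸ hb)
                · exact hDright b hb ⟨hby, h⟩
              · have : b = a := hsep b hb ⟨by linarith [hmem.1], h⟩
                exact absurd hmem.1 (this ▸ lt_irrefl a)
          · by_cases hLr : Lr.Nonempty
            · -- cut on the right at a
              set a := Lr.min' hLr with ha_def
              have haLr : a ∈ Lr := Lr.min'_mem hLr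
              have haD : a ∈ F.D := (D_finite F).mem_toFinset.mp (Finset.mem_filter.mp haLr).1
              have haIoo : a ∈ Ioo y d := (Finset.mem_filter.mp haLr).2
              have haE : a ∈ hEfin.toFinset := by
                rw [Set.Finite.mem_toFinset]
                exact ⟨haD, OmegaN_subset_OmegaInf F I n
                  (hsub ⟨hym.1.trans haIoo.1, haIoo.2⟩)⟩
              obtain ⟨hball, hsep⟩ := hτ a haE
              have hDleft : ∀ b ∈ F.D, b ∉ Ioo c y := by
                intro b hb hmem
                exact hLc ⟨b, hLcD b hb hmem⟩
              have hDright : ∀ b ∈ F.D, b ∉ Ioo y a := by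
                intro b hb hmem
                have hbLr : b ∈ Lr := hLrD b hb ⟨hmem.1, hmem.2.trans haIoo.2⟩
                have : a ≤ b := Lr.min'_le b hbLr
                exact absurd hmem.2 (not_lt.mpr this)
              refine ⟨min c (a - τ), a, ?_, ?_,
                ⟨lt_of_le_of_lt (min_le_left _ _) hym.1, haIoo.1⟩, ?_, ?_⟩
              · exact lt_of_le_of_lt (min_le_left _ _) (hym.1.trans haIoo.1)
              · have : min c (a - τ) ≤ a - τ := min_le_right _ _
                have : τ ≤ a - min c (a - τ) := by linarith
                exact le_trans (min_le_right δb τ) this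
              · intro z hz
                rcases min_lt_iff.mp hz.1 with h | h
                · exact hsub ⟨h, hz.2.trans haIoo.2⟩
                · exact OmegaN_mono F I hn (hball ⟨h, by linarith [hz.2]⟩)
              · intro b hb hmem
                rcases min_lt_iff.mp hmem.1 with h | h
                · rcases lt_trichotomy b y with hby | hby | hby
                  · exact hDleft b hb ⟨h, hby⟩
                  · exact hyD (hby ▸ hb)
                  · exact hDright b hb ⟨hby, hmem.2⟩
                · have : b = a := hsep b hb ⟨h, by linarith [hmem.2]⟩
                  exact absurd hmem.2 (this ▸ lt_irrefl a)
            · -- no cut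
              refine ⟨c, d, hcd, hlen, hym, hsub, ?_⟩
              intro b hb hmem
              rcases lt_trichotomy b y with hby | hby | hby
              · exact hLc ⟨b, hLcD b hb ⟨hmem.1, hby⟩⟩
              · exact hyD (hby ▸ hb)
              · exact hLr ⟨b, hLrD b hb ⟨hby, hmem.2⟩⟩
        obtain ⟨u, v, huv, hlenJ, hyJ, hJΩ, hJD⟩ := hJ
        have hJ01 : Ioo u v ⊆ Ioo 0 1 := fun z hz =>
          FU_subset_Ioo01 (FU_OmegaN F I hI hIopen hconn n) (OmegaN_subset_Icc F I hI n)
            (hJΩ hz)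
        obtain ⟨i, hi⟩ := piece_Ioo F huv hJ01 hJD
        obtain ⟨e₁, e₂, himg, hexp⟩ := branch_img F i huv hi
        have hxmem : F.toFun y ∈ Ioo e₁ e₂ := himg ▸ mem_image_of_mem F.toFun hyJ
        refine ⟨e₁, e₂, hxmem.1.trans hxmem.2, ?_, hxmem, ?_⟩
        · -- β ≤ e₂ - e₁
          have h1 : F.σ * β ≤ F.σ * (v - u) := by nlinarith
          nlinarith
        · rw [← himg]
          refine (image_mono (f := F.toFun) ?_).trans (image_diff_subset F I n)
          intro z hz
          exact ⟨hJΩ hz, fun hzD => hJD z hzD hz⟩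
  refine ⟨β, hβpos, N, hNpos, fun n hn x hx => ?_⟩
  obtain ⟨c, d, hcd, hlen, hxm, hsub⟩ := key n hn x hx
  calc ENNReal.ofReal β ≤ ENNReal.ofReal (d - c) := ENNReal.ofReal_le_ofReal hlen
    _ = volume (Ioo c d) := (Real.volume_Ioo).symm
    _ ≤ volume (connectedComponentIn (OmegaN F I n) x) :=
        measure_mono (isPreconnected_Ioo.subset_connectedComponentIn hxm hsub)
end

section
/- Let f be a piecewise expanding map, I ⊆ [0,1] an open interval, and Ω(I) = ⋃_{n≥0} ω_n(I) where ω_0(I) = I and ω_{n+1}(I) = f(ω_n(I) \ D). Then Ω(I) is a finite union of intervals. -/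
open Set MeasureTheory Filter Function
open scoped ENNReal

namespace Stmt5Aux

open Set

variable {m : ℕ} (F : PWE m) (I : Set ℝ)

/-! ### basic facts about the partition -/

lemma a_lt (j : Fin m) : F.a j.castSucc < F.a j.succ := F.ha (Fin.castSucc_lt_succ : j.castSucc < j.succ)

lemma a_nonneg (i : Fin (m + 1)) : 0 ≤ F.a i := F.ha0 ▸ F.ha.monotone (Fin.zero_le i)

lemma a_le_one (i : Fin (m + 1)) : F.a i ≤ 1 := F.ha1 ▸ F.ha.monotone (Fin.le_last i)

lemma sigma_pos : (0 : ℝ) < F.σ := lt_trans one_pos F.hσ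

/-! ### branch analysis -/

lemma branch_cont (j : Fin m) : Continuous (F.branch j) := (F.branch_smooth j).continuous

lemma deriv_cont (j : Fin m) : Continuous (deriv (F.branch j)) :=
  (F.branch_smooth j).continuous_deriv le_rfl

lemma branch_diff (j : Fin m) : Differentiable ℝ (F.branch j) :=
  (F.branch_smooth j).differentiable one_ne_zero

lemma deriv_ne (j : Fin m) {x : ℝ} (hx : x ∈ Icc (F.a j.castSucc) (F.a j.succ)) :
    deriv (F.branch j) x ≠ 0 := by
  intro h
  have := F.branch_expand j x hx
  rw [h, abs_zero] at this
  linarith [F.hσ]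

lemma deriv_sign (j : Fin m) :
    (∀ x ∈ Icc (F.a j.castSucc) (F.a j.succ), 0 < deriv (F.branch j) x) ∨
    (∀ x ∈ Icc (F.a j.castSucc) (F.a j.succ), deriv (F.branch j) x < 0) := by
  by_contra h
  push_neg at h
  obtain ⟨⟨x, hx, hx0⟩, ⟨y, hy, hy0⟩⟩ := h
  have hx0' : deriv (F.branch j) x < 0 := lt_of_le_of_ne hx0 (deriv_ne F j hx)
  have hy0' : 0 < deriv (F.branch j) y := lt_of_le_of_ne hy0 (Ne.symm (deriv_ne F j hy))
  rcases le_total x y with hxy | hxy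
  · have h0 : (0 : ℝ) ∈ Icc (deriv (F.branch j) x) (deriv (F.branch j) y) :=
      ⟨hx0'.le, hy0'.le⟩
    obtain ⟨z, hz, hz0⟩ := intermediate_value_Icc hxy ((deriv_cont F j).continuousOn) h0
    exact deriv_ne F j ⟨le_trans hx.1 hz.1, le_trans hz.2 hy.2⟩ hz0
  · have h0 : (0 : ℝ) ∈ Icc (deriv (F.branch j) x) (deriv (F.branch j) y) :=
      ⟨hx0'.le, hy0'.le⟩
    obtain ⟨z, hz, hz0⟩ := intermediate_value_Icc' hxy ((deriv_cont F j).continuousOn) h0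
    exact deriv_ne F j ⟨le_trans hy.1 hz.1, le_trans hz.2 hx.2⟩ hz0

open Classical in
/-- orientation of a branch: `true` iff increasing -/
noncomputable def ori (j : Fin m) : Bool :=
  if F.branch j (F.a j.castSucc) < F.branch j (F.a j.succ) then true else false

lemma ori_spec (j : Fin m) :
    (ori F j = true ∧ StrictMonoOn (F.branch j) (Icc (F.a j.castSucc) (F.a j.succ))) ∨
    (ori F j = false ∧ StrictAntiOn (F.branch j) (Icc (F.a j.castSucc) (F.a j.succ))) := by
  have hmem0 : F.a j.castSucc ∈ Icc (F.a j.castSucc) (F.a j.succ) := ⟨le_rfl, (a_lt F j).le⟩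
  have hmem1 : F.a j.succ ∈ Icc (F.a j.castSucc) (F.a j.succ) := ⟨(a_lt F j).le, le_rfl⟩
  rcases deriv_sign F j with h | h
  · have hm : StrictMonoOn (F.branch j) (Icc (F.a j.castSucc) (F.a j.succ)) :=
      strictMonoOn_of_deriv_pos (convex_Icc _ _) ((branch_cont F j).continuousOn)
        (fun x hx => h x (by rw [interior_Icc] at hx; exact Ioo_subset_Icc_self hx))
    left
    refine ⟨?_, hm⟩
    have := hm hmem0 hmem1 (a_lt F j)
    simp [ori, this]
  · have hm : StrictAntiOn (F.branch j) (Icc (F.a j.castSucc) (F.a j.succ)) :=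
      strictAntiOn_of_deriv_neg (convex_Icc _ _) ((branch_cont F j).continuousOn)
        (fun x hx => h x (by rw [interior_Icc] at hx; exact Ioo_subset_Icc_self hx))
    right
    refine ⟨?_, hm⟩
    have := hm hmem0 hmem1 (a_lt F j)
    simp [ori, not_lt_of_gt this, not_lt.2 this.le]

lemma expand (j : Fin m) {x y : ℝ} (hx : x ∈ Icc (F.a j.castSucc) (F.a j.succ))
    (hy : y ∈ Icc (F.a j.castSucc) (F.a j.succ)) (hxy : x < y) :
    F.σ * (y - x) ≤ |F.branch j y - F.branch j x| := by
  obtain ⟨z, hz, hez⟩ := exists_hasDerivAt_eq_slope (F.branch j) (deriv (F.branch j)) hxy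
    ((branch_cont F j).continuousOn)
    (fun u _ => ((branch_diff F j) u).hasDerivAt)
  have hσz : F.σ ≤ |deriv (F.branch j) z| :=
    F.branch_expand j z ⟨le_trans hx.1 hz.1.le, le_trans hz.2.le hy.2⟩
  have hyx : (0 : ℝ) < y - x := by linarith
  have : |F.branch j y - F.branch j x| = |deriv (F.branch j) z| * (y - x) := by
    rw [hez, abs_div, abs_of_pos hyx, div_mul_cancel₀]
    exact ne_of_gt hyx
  rw [this]
  exact mul_le_mul_of_nonneg_right hσz hyx.le

end Stmt5Aux
namespace Stmt5Aux

variable {m : ℕ} (F : PWE m) (I : Set ℝ)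

/-! ### images of subintervals of a branch -/

lemma f_img_eq_branch_img (j : Fin m) {s : Set ℝ}
    (hs : s ⊆ Ioo (F.a j.castSucc) (F.a j.succ)) :
    F.toFun '' s = F.branch j '' s :=
  image_congr (fun x hx => F.branch_eq j (hs hx))

lemma image_mono_case (j : Fin m)
    (h : StrictMonoOn (F.branch j) (Icc (F.a j.castSucc) (F.a j.succ)))
    {p q : ℝ} (hp : F.a j.castSucc ≤ p) (hq : q ≤ F.a j.succ) (hpq : p ≤ q) :
    F.branch j '' Ioo p q = Ioo (F.branch j p) (F.branch j q) := by
  apply Subset.antisymm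
  · rintro _ ⟨x, hx, rfl⟩
    have hxm : x ∈ Icc (F.a j.castSucc) (F.a j.succ) :=
      ⟨le_trans hp hx.1.le, le_trans hx.2.le hq⟩
    exact ⟨h ⟨hp, le_trans hpq hq⟩ hxm hx.1, h hxm ⟨le_trans hp hpq, hq⟩ hx.2⟩
  · exact intermediate_value_Ioo hpq ((branch_cont F j).continuousOn)

lemma image_anti_case (j : Fin m)
    (h : StrictAntiOn (F.branch j) (Icc (F.a j.castSucc) (F.a j.succ)))
    {p q : ℝ} (hp : F.a j.castSucc ≤ p) (hq : q ≤ F.a j.succ) (hpq : p ≤ q) :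
    F.branch j '' Ioo p q = Ioo (F.branch j q) (F.branch j p) := by
  apply Subset.antisymm
  · rintro _ ⟨x, hx, rfl⟩
    have hxm : x ∈ Icc (F.a j.castSucc) (F.a j.succ) :=
      ⟨le_trans hp hx.1.le, le_trans hx.2.le hq⟩
    exact ⟨h hxm ⟨le_trans hp hpq, hq⟩ hx.2, h ⟨hp, le_trans hpq hq⟩ hxm hx.1⟩
  · exact intermediate_value_Ioo' hpq ((branch_cont F j).continuousOn)

/-- description of the image of a nonempty subinterval of a branch -/
lemma image_piece (j : Fin m) {p q : ℝ} (hp : F.a j.castSucc ≤ p) (hq : q ≤ F.a j.succ)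
    (hpq : p < q) :
    (ori F j = true ∧ F.toFun '' Ioo p q = Ioo (F.branch j p) (F.branch j q) ∧
      F.branch j p < F.branch j q ∧
      F.σ * (q - p) ≤ F.branch j q - F.branch j p) ∨
    (ori F j = false ∧ F.toFun '' Ioo p q = Ioo (F.branch j q) (F.branch j p) ∧
      F.branch j q < F.branch j p ∧
      F.σ * (q - p) ≤ F.branch j p - F.branch j q) := by
  have hsub : Ioo p q ⊆ Ioo (F.a j.castSucc) (F.a j.succ) :=
    Ioo_subset_Ioo hp hq
  have hpm : p ∈ Icc (F.a j.castSucc) (F.a j.succ) := ⟨hp, le_trans hpq.le hq⟩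
  have hqm : q ∈ Icc (F.a j.castSucc) (F.a j.succ) := ⟨le_trans hp hpq.le, hq⟩
  have hexp := expand F j hpm hqm hpq
  rcases ori_spec F j with ⟨ho, hm⟩ | ⟨ho, hm⟩
  · left
    have hlt : F.branch j p < F.branch j q := hm hpm hqm hpq
    refine ⟨ho, ?_, hlt, ?_⟩
    · rw [f_img_eq_branch_img F j hsub, image_mono_case F j hm hp hq hpq.le]
    · rwa [abs_of_pos (by linarith)] at hexp
  · right
    have hlt : F.branch j q < F.branch j p := hm hpm hqm hpq
    refine ⟨ho, ?_, hlt, ?_⟩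
    · rw [f_img_eq_branch_img F j hsub, image_anti_case F j hm hp hq hpq.le]
    · rwa [abs_of_neg (by linarith), neg_sub] at hexp

/-! ### generated intervals -/

/-- the intervals generated at stage `n` -/
def GenN : ℕ → Set (Set ℝ)
  | 0 => {I}
  | n + 1 => {S | ∃ K ∈ GenN n, ∃ j : Fin m,
      S = F.toFun '' (K ∩ Ioo (F.a j.castSucc) (F.a j.succ))}

/-- all generated intervals -/
def Gen : Set (Set ℝ) := ⋃ n, GenN F I n

lemma mem_gen_of_genN {n : ℕ} {K : Set ℝ} (h : K ∈ GenN F I n) : K ∈ Gen F I :=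
  mem_iUnion.2 ⟨n, h⟩

lemma gen_step {K : Set ℝ} (h : K ∈ Gen F I) (j : Fin m) :
    F.toFun '' (K ∩ Ioo (F.a j.castSucc) (F.a j.succ)) ∈ Gen F I := by
  rcases mem_iUnion.1 h with ⟨n, hn⟩
  exact mem_gen_of_genN F I (show _ ∈ GenN F I (n + 1) from ⟨K, hn, j, rfl⟩)

/-- helper: endpoints of a nonempty `Ioo` inside an `Icc` -/
lemma bounds_of_Ioo_subset {p q u v : ℝ} (hpq : p < q) (h : Ioo p q ⊆ Icc u v) :
    u ≤ p ∧ q ≤ v := by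
  constructor
  · by_contra hc
    push_neg at hc
    obtain ⟨x, hx1, hx2⟩ := exists_between (lt_min hpq hc)
    have := h ⟨hx1, lt_of_lt_of_le hx2 (min_le_left _ _)⟩
    exact absurd this.1 (not_le.2 (lt_of_lt_of_le hx2 (min_le_right _ _)))
  · by_contra hc
    push_neg at hc
    obtain ⟨x, hx1, hx2⟩ := exists_between (max_lt hpq hc)
    have := h ⟨lt_of_le_of_lt (le_max_left _ _) hx1, hx2⟩
    exact absurd this.2 (not_le.2 (lt_of_le_of_lt (le_max_right _ _) hx1))

/-- the shape invariant of generated intervals -/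
def Shape (K : Set ℝ) : Prop := ∃ p q : ℝ, 0 ≤ p ∧ p ≤ q ∧ q ≤ 1 ∧ K = Ioo p q

lemma shape_I (hI : I ⊆ Icc 0 1) (hIopen : IsOpen I) (hconn : I.OrdConnected) :
    Shape I := by
  rcases eq_empty_or_nonempty I with rfl | hne
  · exact ⟨0, 0, le_rfl, le_rfl, zero_le_one, (Ioo_self 0).symm⟩
  have hbdd : BddAbove I := ⟨1, fun x hx => (hI hx).2⟩
  have hbddb : BddBelow I := ⟨0, fun x hx => (hI hx).1⟩
  refine ⟨sInf I, sSup I, le_csInf hne (fun x hx => (hI hx).1), ?_, 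
    csSup_le hne (fun x hx => (hI hx).2), ?_⟩
  · obtain ⟨x, hx⟩ := hne
    exact le_trans (csInf_le hbddb hx) (le_csSup hbdd hx)
  · ext z
    constructor
    · intro hz
      obtain ⟨ε, hε, hball⟩ := Metric.isOpen_iff.1 hIopen z hz
      have h1 : z - ε / 2 ∈ I := by
        apply hball
        rw [Metric.mem_ball, Real.dist_eq]
        rw [abs_of_nonpos (by linarith)]
        linarith
      have h2 : z + ε / 2 ∈ I := by
        apply hball
        rw [Metric.mem_ball, Real.dist_eq]
        rw [abs_of_nonneg (by linarith)]
        linarith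
      exact ⟨lt_of_le_of_lt (csInf_le hbddb h1) (by linarith),
        lt_of_lt_of_le (by linarith : z < z + ε / 2) (le_csSup hbdd h2)⟩
    · intro hz
      obtain ⟨x, hx, hxz⟩ := exists_lt_of_csInf_lt hne hz.1
      obtain ⟨y, hy, hzy⟩ := exists_lt_of_lt_csSup hne hz.2
      exact hconn.out hx hy ⟨hxz.le, hzy.le⟩

lemma genN_shape (hI : I ⊆ Icc 0 1) (hIopen : IsOpen I) (hconn : I.OrdConnected) :
    ∀ n, ∀ K ∈ GenN F I n, Shape K := by
  intro n
  induction n with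
  | zero =>
    intro K hK
    rw [show K = I from hK]
    exact shape_I I hI hIopen hconn
  | succ n ih =>
    rintro S ⟨K, hK, j, rfl⟩
    obtain ⟨p, q, hp0, hpq, hq1, rfl⟩ := ih K hK
    rw [Ioo_inter_Ioo]
    rcases le_or_gt (q ⊓ F.a j.succ) (p ⊔ F.a j.castSucc) with h | h
    · rw [Ioo_eq_empty (not_lt.2 h), image_empty]
      exact ⟨0, 0, le_rfl, le_rfl, zero_le_one, (Ioo_self 0).symm⟩
    have hp' : F.a j.castSucc ≤ p ⊔ F.a j.castSucc := le_sup_right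
    have hq' : q ⊓ F.a j.succ ≤ F.a j.succ := inf_le_right
    have hIccsub : Ioo (p ⊔ F.a j.castSucc) (q ⊓ F.a j.succ) ⊆ Icc 0 1 := by
      intro x hx
      constructor
      · exact le_of_lt (lt_of_le_of_lt (le_trans (a_nonneg F _) le_sup_right) hx.1)
      · exact le_of_lt (lt_of_lt_of_le hx.2 (le_trans inf_le_left hq1))
    have himgsub : F.toFun '' Ioo (p ⊔ F.a j.castSucc) (q ⊓ F.a j.succ) ⊆ Icc 0 1 := by
      rintro _ ⟨x, hx, rfl⟩
      exact F.mapsTo (hIccsub hx)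
    rcases image_piece F j hp' hq' h with ⟨_, heq, hlt, _⟩ | ⟨_, heq, hlt, _⟩ <;>
    · rw [heq] at himgsub ⊢
      obtain ⟨hb0, hb1⟩ := bounds_of_Ioo_subset hlt himgsub
      exact ⟨_, _, hb0, hlt.le, hb1, rfl⟩

lemma gen_shape {K : Set ℝ} (hI : I ⊆ Icc 0 1) (hIopen : IsOpen I)
    (hconn : I.OrdConnected) (h : K ∈ Gen F I) : Shape K := by
  rcases mem_iUnion.1 h with ⟨n, hn⟩
  exact genN_shape F I hI hIopen hconn n K hn

end Stmt5Aux
namespace Stmt5Aux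

open Set

variable {m : ℕ} (F : PWE m) (I : Set ℝ)

/-! ### locating points in the partition -/

lemma exists_branch_Ico {c : ℝ} (h0 : 0 ≤ c) (h1 : c < 1) :
    ∃ j : Fin m, F.a j.castSucc ≤ c ∧ c < F.a j.succ := by
  classical
  set s : Finset (Fin (m + 1)) := Finset.univ.filter (fun i => F.a i ≤ c) with hs
  have h0s : (0 : Fin (m + 1)) ∈ s := by
    simp [hs, F.ha0, h0]
  have hne : s.Nonempty := ⟨0, h0s⟩
  set i₀ := s.max' hne with hi₀
  have hi₀s : i₀ ∈ s := s.max'_mem hne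
  have hi₀le : F.a i₀ ≤ c := by
    have := hi₀s
    simp [hs] at this
    exact this
  have hlast : i₀ ≠ Fin.last m := by
    intro h
    rw [h, F.ha1] at hi₀le
    linarith
  refine ⟨i₀.castPred hlast, by rwa [Fin.castSucc_castPred], ?_⟩
  by_contra hc
  push_neg at hc
  have hmem : (i₀.castPred hlast).succ ∈ s := by simp [hs, hc]
  have hle := s.le_max' _ hmem
  rw [← hi₀] at hle
  have : i₀ < (i₀.castPred hlast).succ := by
    conv_lhs => rw [← Fin.castSucc_castPred i₀ hlast]
    exact Fin.castSucc_lt_succ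
  exact absurd hle (not_le.2 this)

lemma exists_branch_Ioc {c : ℝ} (h0 : 0 < c) (h1 : c ≤ 1) :
    ∃ j : Fin m, F.a j.castSucc < c ∧ c ≤ F.a j.succ := by
  classical
  set s : Finset (Fin (m + 1)) := Finset.univ.filter (fun i => c ≤ F.a i) with hs
  have h0s : Fin.last m ∈ s := by simp [hs, F.ha1, h1]
  have hne : s.Nonempty := ⟨_, h0s⟩
  set i₁ := s.min' hne with hi₁
  have hi₁s : i₁ ∈ s := s.min'_mem hne
  have hi₁le : c ≤ F.a i₁ := by
    have := hi₁s
    simp [hs] at this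
    exact this
  have h0' : i₁ ≠ 0 := by
    intro h
    rw [h, F.ha0] at hi₁le
    linarith
  refine ⟨i₁.pred h0', ?_, by rwa [Fin.succ_pred]⟩
  by_contra hc
  push_neg at hc
  have hmem : (i₁.pred h0').castSucc ∈ s := by simp [hs, hc]
  have hle := s.min'_le _ hmem
  rw [← hi₁] at hle
  have : (i₁.pred h0').castSucc < i₁ := by
    conv_rhs => rw [← Fin.succ_pred i₁ h0']
    exact Fin.castSucc_lt_succ
  exact absurd hle (not_le.2 this)

lemma branch_Ico_unique {c : ℝ} {j j' : Fin m}
    (h : F.a j.castSucc ≤ c ∧ c < F.a j.succ)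
    (h' : F.a j'.castSucc ≤ c ∧ c < F.a j'.succ) : j = j' := by
  by_contra hne
  rcases lt_or_gt_of_ne hne with hlt | hlt
  · have : j.succ ≤ j'.castSucc := Fin.succ_le_castSucc_iff.2 hlt
    have := F.ha.monotone this
    linarith [h.2, h'.1]
  · have : j'.succ ≤ j.castSucc := Fin.succ_le_castSucc_iff.2 hlt
    have := F.ha.monotone this
    linarith [h.1, h'.2]

lemma branch_Ioc_unique {c : ℝ} {j j' : Fin m}
    (h : F.a j.castSucc < c ∧ c ≤ F.a j.succ)
    (h' : F.a j'.castSucc < c ∧ c ≤ F.a j'.succ) : j = j' := by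
  by_contra hne
  rcases lt_or_gt_of_ne hne with hlt | hlt
  · have : j.succ ≤ j'.castSucc := Fin.succ_le_castSucc_iff.2 hlt
    have := F.ha.monotone this
    linarith [h.2, h'.1]
  · have : j'.succ ≤ j.castSucc := Fin.succ_le_castSucc_iff.2 hlt
    have := F.ha.monotone this
    linarith [h.1, h'.2]

lemma disjoint_branch {j j' : Fin m} (h : j ≠ j') :
    Icc (F.a j.castSucc) (F.a j.succ) ∩ Ioo (F.a j'.castSucc) (F.a j'.succ) = ∅ := by
  rw [eq_empty_iff_forall_notMem]
  rintro x ⟨hx1, hx2⟩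
  rcases lt_or_gt_of_ne h with hlt | hlt
  · have := F.ha.monotone (Fin.succ_le_castSucc_iff.2 hlt)
    have h1 := hx1.2
    have h2 := hx2.1
    linarith
  · have := F.ha.monotone (Fin.succ_le_castSucc_iff.2 hlt)
    have h1 := hx1.1
    have h2 := hx2.2
    linarith

/-! ### removing the discontinuity set -/

lemma diff_D {K : Set ℝ} (hK : K ⊆ Ioo 0 1) :
    K \ F.D = ⋃ j : Fin m, K ∩ Ioo (F.a j.castSucc) (F.a j.succ) := by
  ext x
  simp only [mem_diff, mem_iUnion, mem_inter_iff]
  constructor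
  · rintro ⟨hx, hD⟩
    obtain ⟨j, hj1, hj2⟩ := exists_branch_Ico F (le_of_lt (hK hx).1) (hK hx).2
    refine ⟨j, hx, ?_, hj2⟩
    rcases eq_or_lt_of_le hj1 with heq | h
    · exfalso
      by_cases h0 : j.castSucc = 0
      · rw [h0, F.ha0] at heq
        exact absurd (hK hx).1 (not_lt.2 heq.ge)
      · exact hD ⟨j.castSucc, h0,
          ne_of_lt ((Fin.castSucc_lt_succ : j.castSucc < j.succ).trans_le (Fin.le_last _)), heq.symm⟩
    · exact h
  · rintro ⟨j, hx, h1, h2⟩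
    refine ⟨hx, ?_⟩
    rintro ⟨i, hi0, hilast, rfl⟩
    have hgt : j.castSucc < i := F.ha.lt_iff_lt.1 h1
    have hlt : i < j.succ := F.ha.lt_iff_lt.1 h2
    have := Fin.castSucc_lt_iff_succ_le.1 hgt
    exact absurd hlt (not_lt.2 this)

lemma omega_subset_Icc (hI : I ⊆ Icc 0 1) : ∀ n, omegaSet F I n ⊆ Icc 0 1 := by
  intro n
  induction n with
  | zero => exact hI
  | succ n ih =>
    rintro _ ⟨x, hx, rfl⟩
    exact F.mapsTo (ih hx.1)

end Stmt5Aux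
namespace Stmt5Aux

open Set

variable {m : ℕ} (F : PWE m) (I : Set ℝ)

lemma shape_sub_Ioo {K : Set ℝ} (h : Shape K) : K ⊆ Ioo 0 1 := by
  obtain ⟨p, q, hp0, hpq, hq1, rfl⟩ := h
  exact fun x hx => ⟨lt_of_le_of_lt hp0 hx.1, lt_of_lt_of_le hx.2 hq1⟩

lemma omega_eq (hI : I ⊆ Icc 0 1) (hIopen : IsOpen I) (hconn : I.OrdConnected) :
    ∀ n, omegaSet F I n = ⋃₀ GenN F I n := by
  intro n
  induction n with
  | zero => simp [omegaSet, GenN]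
  | succ n ih =>
    show F.toFun '' (omegaSet F I n \ F.D) = _
    rw [ih]
    ext y
    simp only [mem_image, mem_sUnion, mem_diff]
    constructor
    · rintro ⟨x, ⟨⟨K, hK, hxK⟩, hxD⟩, rfl⟩
      have hsub := shape_sub_Ioo (genN_shape F I hI hIopen hconn n K hK)
      have hx : x ∈ K \ F.D := ⟨hxK, hxD⟩
      rw [diff_D F hsub] at hx
      obtain ⟨j, hj⟩ := mem_iUnion.1 hx
      exact ⟨F.toFun '' (K ∩ Ioo (F.a j.castSucc) (F.a j.succ)),
        ⟨K, hK, j, rfl⟩, ⟨x, hj, rfl⟩⟩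
    · rintro ⟨S, ⟨K, hK, j, rfl⟩, ⟨x, hx, rfl⟩⟩
      refine ⟨x, ⟨⟨K, hK, hx.1⟩, ?_⟩, rfl⟩
      have hsub := shape_sub_Ioo (genN_shape F I hI hIopen hconn n K hK)
      have hxd : x ∈ K \ F.D := by
        rw [diff_D F hsub]
        exact mem_iUnion.2 ⟨j, hx⟩
      exact hxd.2

lemma Ioo_inj {p q p' q' : ℝ} (h : p < q) (heq : Ioo p q = Ioo p' q') :
    p = p' ∧ q = q' := by
  have hne : (Ioo p' q').Nonempty := heq ▸ nonempty_Ioo.2 h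
  have h' : p' < q' := nonempty_Ioo.1 hne
  have h1 := bounds_of_Ioo_subset h (by rw [heq]; exact Ioo_subset_Icc_self)
  have h2 := bounds_of_Ioo_subset h' (by rw [← heq]; exact Ioo_subset_Icc_self)
  exact ⟨le_antisymm h2.1 h1.1, le_antisymm h1.2 h2.2⟩

lemma member_bounds (hI : I ⊆ Icc 0 1) (hIopen : IsOpen I) (hconn : I.OrdConnected)
    {u v : ℝ} (huv : u < v) (hG : Ioo u v ∈ Gen F I) : 0 ≤ u ∧ v ≤ 1 := by
  obtain ⟨p, q, hp0, hpq, hq1, heq⟩ := gen_shape F I hI hIopen hconn hG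
  obtain ⟨h1, h2⟩ := Ioo_inj huv heq
  exact ⟨h1 ▸ hp0, h2 ▸ hq1⟩

/-! ### anchored intervals -/

/-- `K` is an interval anchored at `α.1`, on the right if `α.2`, on the left otherwise. -/
def Anch (α : ℝ × Bool) (K : Set ℝ) : Prop :=
  ∃ t, if α.2 then α.1 < t ∧ K = Ioo α.1 t else t < α.1 ∧ K = Ioo t α.1

lemma anch_true {c t : ℝ} (h : c < t) : Anch (c, true) (Ioo c t) := ⟨t, by simp [h]⟩

lemma anch_false {c t : ℝ} (h : t < c) : Anch (c, false) (Ioo t c) := ⟨t, by simp [h]⟩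

/-- the branch containing the germ of an anchored interval -/
noncomputable def idx (α : ℝ × Bool) : Fin m :=
  if h : ∃ j : Fin m, (if α.2 then F.a j.castSucc ≤ α.1 ∧ α.1 < F.a j.succ
      else F.a j.castSucc < α.1 ∧ α.1 ≤ F.a j.succ) then h.choose else ⟨0, F.hm⟩

lemma idx_spec_true {c : ℝ} (h0 : 0 ≤ c) (h1 : c < 1) :
    F.a (idx F (c, true)).castSucc ≤ c ∧ c < F.a (idx F (c, true)).succ := by
  have hex : ∃ j : Fin m, (if (true : Bool) then F.a j.castSucc ≤ c ∧ c < F.a j.succ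
      else F.a j.castSucc < c ∧ c ≤ F.a j.succ) := by
    simpa using exists_branch_Ico F h0 h1
  have := hex.choose_spec
  rw [idx, dif_pos hex]
  simpa using this

lemma idx_spec_false {c : ℝ} (h0 : 0 < c) (h1 : c ≤ 1) :
    F.a (idx F (c, false)).castSucc < c ∧ c ≤ F.a (idx F (c, false)).succ := by
  have hex : ∃ j : Fin m, (if (false : Bool) then F.a j.castSucc ≤ c ∧ c < F.a j.succ
      else F.a j.castSucc < c ∧ c ≤ F.a j.succ) := by
    simpa using exists_branch_Ioc F h0 h1
  have := hex.choose_spec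
  rw [idx, dif_pos hex]
  simpa using this

/-- the anchor dynamics -/
noncomputable def gstep (α : ℝ × Bool) : ℝ × Bool :=
  (F.branch (idx F α) α.1, if ori F (idx F α) then α.2 else !α.2)

/-- the class of `α` is "cut": some member crosses the adjacent partition point -/
def CutCl (α : ℝ × Bool) : Prop :=
  if α.2 then ∃ t, F.a (idx F α).succ < t ∧ Ioo α.1 t ∈ Gen F I
  else ∃ t, t < F.a (idx F α).castSucc ∧ Ioo t α.1 ∈ Gen F I

/-- the class of `α` is nonempty -/
def ClNE (α : ℝ × Bool) : Prop := ∃ K ∈ Gen F I, Anch α K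

/-- the base anchors -/
noncomputable def baseA : Fin m × Bool → ℝ × Bool
  | (j, true) => (F.branch j (F.a j.castSucc), ori F j)
  | (j, false) => (F.branch j (F.a j.succ), !ori F j)

/-- the good anchors: finite chains of anchors starting at base anchors -/
def GA : Set (ℝ × Bool) :=
  {β | ∃ ρ : Fin m × Bool, ∃ k : ℕ, β = (gstep F)^[k] (baseA F ρ) ∧
    ∀ k' < k, ClNE F I ((gstep F)^[k'] (baseA F ρ)) ∧
      ¬ CutCl F I ((gstep F)^[k'] (baseA F ρ))}

lemma GA_base (ρ : Fin m × Bool) : baseA F ρ ∈ GA F I :=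
  ⟨ρ, 0, rfl, fun k' hk' => absurd hk' (Nat.not_lt_zero _)⟩

lemma GA_extend {α : ℝ × Bool} (hα : α ∈ GA F I) (hne : ClNE F I α)
    (hnc : ¬ CutCl F I α) : gstep F α ∈ GA F I := by
  obtain ⟨ρ, k, rfl, hpre⟩ := hα
  refine ⟨ρ, k + 1, (Function.iterate_succ_apply' _ _ _).symm, ?_⟩
  intro k' hk'
  rcases Nat.lt_succ_iff_lt_or_eq.1 hk' with h | rfl
  · exact hpre k' h
  · exact ⟨hne, hnc⟩

/-- a member of an uncut class maps to a member of the successor class,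
with length expanded by `σ` -/
lemma uncut_member_step (hI : I ⊆ Icc 0 1) (hIopen : IsOpen I) (hconn : I.OrdConnected)
    {α : ℝ × Bool} {u v : ℝ} (huv : u < v) (hG : Ioo u v ∈ Gen F I)
    (hA : Anch α (Ioo u v)) (hnc : ¬ CutCl F I α) :
    ∃ u' v', u' < v' ∧ Ioo u' v' ∈ Gen F I ∧ Anch (gstep F α) (Ioo u' v') ∧
      F.σ * (v - u) ≤ v' - u' ∧
      F.toFun '' (Ioo u v ∩
        Ioo (F.a (idx F α).castSucc) (F.a (idx F α).succ)) = Ioo u' v' := by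
  obtain ⟨c, s⟩ := α
  obtain ⟨hu0, hv1⟩ := member_bounds F I hI hIopen hconn huv hG
  cases s with
  | true =>
    obtain ⟨t, ht, heq⟩ := hA
    simp only [if_true] at ht heq
    obtain ⟨h1, h2⟩ := Ioo_inj huv heq
    subst h1
    have hc1 : u < 1 := lt_of_lt_of_le huv hv1
    obtain ⟨hj1, hj2⟩ := idx_spec_true F hu0 hc1
    set j := idx F (u, true) with hjdef
    have hvle : v ≤ F.a j.succ := by
      by_contra hcon
      push_neg at hcon
      exact hnc ⟨v, hcon, hG⟩
    have hpiece : Ioo u v ∩ Ioo (F.a j.castSucc) (F.a j.succ) = Ioo u v := by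
      rw [Ioo_inter_Ioo, sup_eq_left.2 hj1, inf_eq_left.2 hvle]
    have hGen' := gen_step F I hG j
    rw [hpiece] at hGen'
    rcases image_piece F j hj1 hvle huv with ⟨ho, himg, hlt, hexp⟩ | ⟨ho, himg, hlt, hexp⟩
    · refine ⟨_, _, hlt, by rwa [himg] at hGen', ?_, hexp, by rw [hpiece, himg]⟩
      have hg : gstep F (u, true) = (F.branch j u, true) := by
        simp [gstep, ← hjdef, ho]
      rw [hg]
      exact anch_true hlt
    · refine ⟨_, _, hlt, by rwa [himg] at hGen', ?_, hexp, by rw [hpiece, himg]⟩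
      have hg : gstep F (u, true) = (F.branch j u, false) := by
        simp [gstep, ← hjdef, ho]
      rw [hg]
      exact anch_false hlt
  | false =>
    obtain ⟨t, ht, heq⟩ := hA
    simp only [if_false, Bool.false_eq_true] at ht heq
    obtain ⟨h1, h2⟩ := Ioo_inj huv heq
    subst h2
    have hc0 : 0 < v := lt_of_le_of_lt hu0 huv
    obtain ⟨hj1, hj2⟩ := idx_spec_false F hc0 hv1
    set j := idx F (v, false) with hjdef
    have hule : F.a j.castSucc ≤ u := by
      by_contra hcon
      push_neg at hcon
      exact hnc ⟨u, hcon, hG⟩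
    have hpiece : Ioo u v ∩ Ioo (F.a j.castSucc) (F.a j.succ) = Ioo u v := by
      rw [Ioo_inter_Ioo, sup_eq_left.2 hule, inf_eq_left.2 hj2]
    have hGen' := gen_step F I hG j
    rw [hpiece] at hGen'
    rcases image_piece F j hule hj2 huv with ⟨ho, himg, hlt, hexp⟩ | ⟨ho, himg, hlt, hexp⟩
    · refine ⟨_, _, hlt, by rwa [himg] at hGen', ?_, hexp, by rw [hpiece, himg]⟩
      have hg : gstep F (v, false) = (F.branch j v, false) := by
        simp [gstep, ← hjdef, ho]
      rw [hg]
      exact anch_false hlt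
    · refine ⟨_, _, hlt, by rwa [himg] at hGen', ?_, hexp, by rw [hpiece, himg]⟩
      have hg : gstep F (v, false) = (F.branch j v, true) := by
        simp [gstep, ← hjdef, ho]
      rw [hg]
      exact anch_true hlt
end Stmt5Aux
namespace Stmt5Aux

open Set

variable {m : ℕ} (F : PWE m) (I : Set ℝ)

lemma anch_true_elim {c : ℝ} {K : Set ℝ} (h : Anch (c, true) K) :
    ∃ t, c < t ∧ K = Ioo c t := by
  obtain ⟨t, ht⟩ := h
  exact ⟨t, by simpa using ht⟩

lemma anch_false_elim {c : ℝ} {K : Set ℝ} (h : Anch (c, false) K) :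
    ∃ t, t < c ∧ K = Ioo t c := by
  obtain ⟨t, ht⟩ := h
  exact ⟨t, by simpa using ht⟩

lemma anch_shape {β : ℝ × Bool} {K : Set ℝ} (h : Anch β K) :
    ∃ u v, u < v ∧ K = Ioo u v := by
  obtain ⟨c, s⟩ := β
  cases s
  · obtain ⟨t, ht, rfl⟩ := anch_false_elim h
    exact ⟨t, c, ht, rfl⟩
  · obtain ⟨t, ht, rfl⟩ := anch_true_elim h
    exact ⟨c, t, ht, rfl⟩

/-- every chain of anchor classes terminates: some iterate is empty or cut -/
lemma exists_term (hI : I ⊆ Icc 0 1) (hIopen : IsOpen I) (hconn : I.OrdConnected)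
    (α : ℝ × Bool) :
    ∃ k, ¬ ClNE F I ((gstep F)^[k] α) ∨ CutCl F I ((gstep F)^[k] α) := by
  by_contra hcon
  push_neg at hcon
  obtain ⟨K₀, hK₀G, hK₀A⟩ := (hcon 0).1
  obtain ⟨u₀, v₀, huv₀, rfl⟩ := anch_shape hK₀A
  have hL : 0 < v₀ - u₀ := by linarith
  have key : ∀ k, ∃ u v, u < v ∧ Ioo u v ∈ Gen F I ∧
      Anch ((gstep F)^[k] α) (Ioo u v) ∧ (v₀ - u₀) * F.σ ^ k ≤ v - u := by
    intro k
    induction k with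
    | zero => exact ⟨u₀, v₀, huv₀, hK₀G, hK₀A, by simp⟩
    | succ k ih =>
      obtain ⟨u, v, huv, hG, hA, hlen⟩ := ih
      obtain ⟨u', v', huv', hG', hA', hexp, _⟩ :=
        uncut_member_step F I hI hIopen hconn huv hG hA (hcon k).2
      refine ⟨u', v', huv', hG', by rwa [Function.iterate_succ_apply'], ?_⟩
      have hσ0 : (0 : ℝ) ≤ F.σ := (sigma_pos F).le
      calc (v₀ - u₀) * F.σ ^ (k + 1) = (v₀ - u₀) * F.σ ^ k * F.σ := by ring
      _ ≤ (v - u) * F.σ := mul_le_mul_of_nonneg_right hlen hσ0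
      _ = F.σ * (v - u) := by ring
      _ ≤ v' - u' := hexp
  obtain ⟨k, hk⟩ := pow_unbounded_of_one_lt ((v₀ - u₀)⁻¹) F.hσ
  obtain ⟨u, v, huv, hG, hA, hlen⟩ := key k
  obtain ⟨hu0, hv1⟩ := member_bounds F I hI hIopen hconn huv hG
  have h1 : (1 : ℝ) < (v₀ - u₀) * F.σ ^ k := by
    rw [inv_lt_iff_one_lt_mul₀ hL] at hk
    linarith [hk]
  have : v - u ≤ 1 := by linarith
  linarith

/-- the free chain of `ω`-sets terminates -/
lemma exists_TIwit (hI : I ⊆ Icc 0 1) (hIopen : IsOpen I) (hconn : I.OrdConnected) :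
    ∃ k, omegaSet F I k = ∅ ∨
      ¬ ∃ j : Fin m, omegaSet F I k ⊆ Icc (F.a j.castSucc) (F.a j.succ) := by
  by_contra hcon
  push_neg at hcon
  have h0 := hcon 0
  obtain ⟨p₀, q₀, hp₀, hpq₀, hq₀, hI0⟩ := shape_I I hI hIopen hconn
  have hIω : omegaSet F I 0 = Ioo p₀ q₀ := hI0
  have hpq₀' : p₀ < q₀ := by
    rcases eq_or_lt_of_le hpq₀ with rfl | h
    · exfalso
      have hh := h0.1
      rw [hIω, Ioo_self] at hh
      exact Set.not_nonempty_empty hh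
    · exact h
  have key : ∀ k, ∃ p q, p < q ∧ omegaSet F I k = Ioo p q ∧
      omegaSet F I k ∈ GenN F I k ∧ (q₀ - p₀) * F.σ ^ k ≤ q - p := by
    intro k
    induction k with
    | zero => exact ⟨p₀, q₀, hpq₀', hIω, rfl, by simp⟩
    | succ k ih =>
      obtain ⟨p, q, hpq, hωk, hGk, hlen⟩ := ih
      obtain ⟨hne, j, hsub⟩ := hcon k
      rw [hωk] at hsub
      obtain ⟨hap, hqa⟩ := bounds_of_Ioo_subset hpq hsub
      have hpiece : omegaSet F I k ∩ Ioo (F.a j.castSucc) (F.a j.succ) = Ioo p q := by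
        rw [hωk, Ioo_inter_Ioo, sup_eq_left.2 hap, inf_eq_left.2 hqa]
      have hωsub : omegaSet F I k ⊆ Ioo 0 1 :=
        shape_sub_Ioo (genN_shape F I hI hIopen hconn k _ hGk)
      have hD : omegaSet F I k \ F.D = Ioo p q := by
        rw [diff_D F hωsub]
        apply Subset.antisymm
        · rintro x hx
          obtain ⟨j', hj'⟩ := mem_iUnion.1 hx
          by_cases hjj : j' = j
          · rw [hjj, hpiece] at hj'
            exact hj'
          · exfalso
            have hd := disjoint_branch F (Ne.symm hjj)
            have : x ∈ Icc (F.a j.castSucc) (F.a j.succ) ∩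
                Ioo (F.a j'.castSucc) (F.a j'.succ) := ⟨hsub (hωk ▸ hj'.1), hj'.2⟩
            rw [hd] at this
            exact this
        · intro x hx
          rw [← hpiece] at hx
          exact mem_iUnion.2 ⟨j, hx⟩
      have hω1 : omegaSet F I (k + 1) = F.toFun '' Ioo p q := by
        show F.toFun '' (omegaSet F I k \ F.D) = _
        rw [hD]
      have hG1 : omegaSet F I (k + 1) ∈ GenN F I (k + 1) := by
        refine ⟨omegaSet F I k, hGk, j, ?_⟩
        rw [hω1, hpiece]
      rcases image_piece F j hap hqa hpq with ⟨_, himg, hlt, hexp⟩ | ⟨_, himg, hlt, hexp⟩ <;>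
      · refine ⟨_, _, hlt, by rw [hω1, himg], hG1, ?_⟩
        have hσ0 : (0 : ℝ) ≤ F.σ := (sigma_pos F).le
        calc (q₀ - p₀) * F.σ ^ (k + 1) = (q₀ - p₀) * F.σ ^ k * F.σ := by ring
        _ ≤ (q - p) * F.σ := mul_le_mul_of_nonneg_right hlen hσ0
        _ = F.σ * (q - p) := by ring
        _ ≤ _ := hexp
  obtain ⟨k, hk⟩ := pow_unbounded_of_one_lt ((q₀ - p₀)⁻¹) F.hσ
  obtain ⟨p, q, hpq, hωk, hGk, hlen⟩ := key k
  obtain ⟨pp, qq, hpp, hppqq, hqq, heqk⟩ := genN_shape F I hI hIopen hconn k _ hGk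
  rw [hωk] at heqk
  obtain ⟨h1, h2⟩ := Ioo_inj hpq heqk
  have hL : 0 < q₀ - p₀ := by linarith
  have hgt : (1 : ℝ) < (q₀ - p₀) * F.σ ^ k := by
    rw [inv_lt_iff_one_lt_mul₀ hL] at hk
    linarith [hk]
  have : q - p ≤ 1 := by
    subst h1; subst h2
    linarith
  linarith

/-- `ω_k` is a single generated interval while the free chain is uncut -/
lemma omega_chain (hI : I ⊆ Icc 0 1) (hIopen : IsOpen I) (hconn : I.OrdConnected)
    {T : ℕ} (hT1 : ∀ k < T, (omegaSet F I k).Nonempty ∧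
      ∃ j : Fin m, omegaSet F I k ⊆ Icc (F.a j.castSucc) (F.a j.succ)) :
    ∀ k ≤ T, omegaSet F I k ∈ GenN F I k := by
  intro k
  induction k with
  | zero => intro _; exact rfl
  | succ k ih =>
    intro hk
    have hkT : k < T := Nat.lt_of_succ_le hk
    have hGk := ih (le_of_lt hkT)
    obtain ⟨hne, j, hsub⟩ := hT1 k hkT
    obtain ⟨p, q, hp0, hpq0, hq1, hωk⟩ := genN_shape F I hI hIopen hconn k _ hGk
    have hpq : p < q := by
      rcases eq_or_lt_of_le hpq0 with rfl | h
      · exact absurd (by rw [hωk, Ioo_self] at hne; exact hne) (by simp [Set.not_nonempty_empty])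
      · exact h
    rw [hωk] at hsub
    obtain ⟨hap, hqa⟩ := bounds_of_Ioo_subset hpq hsub
    have hpiece : omegaSet F I k ∩ Ioo (F.a j.castSucc) (F.a j.succ) = Ioo p q := by
      rw [hωk, Ioo_inter_Ioo, sup_eq_left.2 hap, inf_eq_left.2 hqa]
    have hωsub : omegaSet F I k ⊆ Ioo 0 1 :=
      shape_sub_Ioo (genN_shape F I hI hIopen hconn k _ hGk)
    have hD : omegaSet F I k \ F.D = Ioo p q := by
      rw [diff_D F hωsub]
      apply Subset.antisymm
      · rintro x hx
        obtain ⟨j', hj'⟩ := mem_iUnion.1 hx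
        by_cases hjj : j' = j
        · rw [hjj, hpiece] at hj'
          exact hj'
        · exfalso
          have hd := disjoint_branch F (Ne.symm hjj)
          have : x ∈ Icc (F.a j.castSucc) (F.a j.succ) ∩
              Ioo (F.a j'.castSucc) (F.a j'.succ) := ⟨hsub (hωk ▸ hj'.1), hj'.2⟩
          rw [hd] at this
          exact this
      · intro x hx
        rw [← hpiece] at hx
        exact mem_iUnion.2 ⟨j, hx⟩
    refine ⟨omegaSet F I k, hGk, j, ?_⟩
    show F.toFun '' (omegaSet F I k \ F.D) = _
    rw [hD, hpiece]

end Stmt5Aux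
namespace Stmt5Aux

open Set

variable {m : ℕ} (F : PWE m) (I : Set ℝ)

/-- pieces of an uncut `ω_k` -/
lemma omega_piece (hI : I ⊆ Icc 0 1) (hIopen : IsOpen I) (hconn : I.OrdConnected)
    {k : ℕ} {j : Fin m} {p q : ℝ}
    (hGk : omegaSet F I k ∈ GenN F I k) (hpq : p < q) (hωk : omegaSet F I k = Ioo p q)
    (hsub : Ioo p q ⊆ Icc (F.a j.castSucc) (F.a j.succ)) :
    omegaSet F I (k + 1) =
      F.toFun '' (omegaSet F I k ∩ Ioo (F.a j.castSucc) (F.a j.succ)) ∧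
    ∀ j'' : Fin m, j'' ≠ j →
      omegaSet F I k ∩ Ioo (F.a j''.castSucc) (F.a j''.succ) = ∅ := by
  obtain ⟨hap, hqa⟩ := bounds_of_Ioo_subset hpq hsub
  have hdisj : ∀ j'' : Fin m, j'' ≠ j →
      omegaSet F I k ∩ Ioo (F.a j''.castSucc) (F.a j''.succ) = ∅ := by
    intro j'' hjj
    rw [eq_empty_iff_forall_notMem]
    rintro x ⟨hx1, hx2⟩
    have hd := disjoint_branch F (Ne.symm hjj)
    have : x ∈ Icc (F.a j.castSucc) (F.a j.succ) ∩
        Ioo (F.a j''.castSucc) (F.a j''.succ) := ⟨hsub (hωk ▸ hx1), hx2⟩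
    rw [hd] at this
    exact this
  refine ⟨?_, hdisj⟩
  have hpiece : omegaSet F I k ∩ Ioo (F.a j.castSucc) (F.a j.succ) = Ioo p q := by
    rw [hωk, Ioo_inter_Ioo, sup_eq_left.2 hap, inf_eq_left.2 hqa]
  have hωsub : omegaSet F I k ⊆ Ioo 0 1 :=
    shape_sub_Ioo (genN_shape F I hI hIopen hconn k _ hGk)
  have hD : omegaSet F I k \ F.D = Ioo p q := by
    rw [diff_D F hωsub]
    apply Subset.antisymm
    · rintro x hx
      obtain ⟨j'', hj''⟩ := mem_iUnion.1 hx
      by_cases hjj : j'' = j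
      · rw [hjj, hpiece] at hj''
        exact hj''
      · exfalso
        have := hdisj j'' hjj
        rw [this] at hj''
        exact hj''
    · intro x hx
      rw [← hpiece] at hx
      exact mem_iUnion.2 ⟨j, hx⟩
  show F.toFun '' (omegaSet F I k \ F.D) = _
  rw [hD, hpiece]

/-- the image of a piece whose left endpoint is a partition point is anchored
at a base anchor -/
lemma left_anchored_image_good (j' : Fin m) {q : ℝ}
    (h1 : F.a j'.castSucc < q) (h2 : q ≤ F.a j'.succ) :
    ∃ β ∈ GA F I, Anch β (F.toFun '' Ioo (F.a j'.castSucc) q) := by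
  rcases image_piece F j' le_rfl h2 h1 with ⟨ho, himg, hlt, _⟩ | ⟨ho, himg, hlt, _⟩
  · refine ⟨baseA F (j', true), GA_base F I _, ?_⟩
    have hb : baseA F (j', true) = (F.branch j' (F.a j'.castSucc), true) := by
      simp [baseA, ho]
    rw [himg, hb]
    exact anch_true hlt
  · refine ⟨baseA F (j', true), GA_base F I _, ?_⟩
    have hb : baseA F (j', true) = (F.branch j' (F.a j'.castSucc), false) := by
      simp [baseA, ho]
    rw [himg, hb]
    exact anch_false hlt

/-- the image of a piece whose right endpoint is a partition point is anchored
at a base anchor -/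
lemma right_anchored_image_good (j' : Fin m) {p : ℝ}
    (h1 : F.a j'.castSucc ≤ p) (h2 : p < F.a j'.succ) :
    ∃ β ∈ GA F I, Anch β (F.toFun '' Ioo p (F.a j'.succ)) := by
  rcases image_piece F j' h1 le_rfl h2 with ⟨ho, himg, hlt, _⟩ | ⟨ho, himg, hlt, _⟩
  · refine ⟨baseA F (j', false), GA_base F I _, ?_⟩
    have hb : baseA F (j', false) = (F.branch j' (F.a j'.succ), false) := by
      simp [baseA, ho]
    rw [himg, hb]
    exact anch_false hlt
  · refine ⟨baseA F (j', false), GA_base F I _, ?_⟩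
    have hb : baseA F (j', false) = (F.branch j' (F.a j'.succ), true) := by
      simp [baseA, ho]
    rw [himg, hb]
    exact anch_true hlt

/-- good sets -/
def Good (T : ℕ) (M : Set ℝ) : Prop :=
  (∃ k, k ≤ T ∧ M = omegaSet F I k) ∨ ∃ α ∈ GA F I, M ∈ Gen F I ∧ Anch α M

end Stmt5Aux
namespace Stmt5Aux

open Set

variable {m : ℕ} (F : PWE m) (I : Set ℝ)

lemma good_closure (hI : I ⊆ Icc 0 1) (hIopen : IsOpen I) (hconn : I.OrdConnected)
    {T : ℕ}
    (hT1 : ∀ k < T, (omegaSet F I k).Nonempty ∧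
      ∃ j : Fin m, omegaSet F I k ⊆ Icc (F.a j.castSucc) (F.a j.succ))
    (hT2 : omegaSet F I T = ∅ ∨
      ¬ ∃ j : Fin m, omegaSet F I T ⊆ Icc (F.a j.castSucc) (F.a j.succ))
    {M : Set ℝ} (hM : Good F I T M) (j' : Fin m) :
    F.toFun '' (M ∩ Ioo (F.a j'.castSucc) (F.a j'.succ)) = ∅ ∨
    ∃ M', Good F I T M' ∧
      F.toFun '' (M ∩ Ioo (F.a j'.castSucc) (F.a j'.succ)) ⊆ M' := by
  rcases hM with ⟨k, hkT, rfl⟩ | ⟨α, hGA, hGen, hAnch⟩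
  · -- M = ω_k
    rcases lt_or_eq_of_le hkT with hk | rfl
    · -- k < T : the chain is uncut here
      obtain ⟨hne, j, hsub⟩ := hT1 k hk
      have hGk := omega_chain F I hI hIopen hconn hT1 k hk.le
      obtain ⟨p, q, hp0, hpq0, hq1, hωk⟩ := genN_shape F I hI hIopen hconn k _ hGk
      have hpq : p < q := by
        rcases eq_or_lt_of_le hpq0 with rfl | h
        · exfalso
          rw [hωk, Ioo_self] at hne
          exact Set.not_nonempty_empty hne
        · exact h
      rw [hωk] at hsub
      obtain ⟨himg, hdisj⟩ := omega_piece F I hI hIopen hconn hGk hpq hωk hsub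
      by_cases hjj : j' = j
      · subst hjj
        exact Or.inr ⟨omegaSet F I (k + 1), Or.inl ⟨k + 1, hk, rfl⟩, himg.symm.subset⟩
      · left
        rw [hdisj j' hjj, image_empty]
    · -- k = T
      rcases eq_empty_or_nonempty (omegaSet F I k) with hemp | hne
      · left
        rw [hemp, empty_inter, image_empty]
      rcases hT2 with hemp | hcut
      · exact absurd hemp (nonempty_iff_ne_empty.1 hne)
      have hGT := omega_chain F I hI hIopen hconn hT1 k le_rfl
      obtain ⟨p, q, hp0, hpq0, hq1, hωT⟩ := genN_shape F I hI hIopen hconn k _ hGT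
      have hpq : p < q := by
        rcases eq_or_lt_of_le hpq0 with rfl | h
        · exfalso
          rw [hωT, Ioo_self] at hne
          exact Set.not_nonempty_empty hne
        · exact h
      have hMGen : omegaSet F I k ∈ Gen F I := mem_gen_of_genN F I hGT
      rw [hωT, Ioo_inter_Ioo]
      rcases le_or_gt (q ⊓ F.a j'.succ) (p ⊔ F.a j'.castSucc) with hle | hlt
      · left
        rw [Ioo_eq_empty (not_lt.2 hle), image_empty]
      right
      rcases le_or_gt p (F.a j'.castSucc) with hpa | hpa
      · -- left endpoint of the piece is the partition point
        have hsup : p ⊔ F.a j'.castSucc = F.a j'.castSucc := sup_eq_right.2 hpa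
        rw [hsup] at hlt ⊢
        obtain ⟨β, hβ, hAβ⟩ :=
          left_anchored_image_good F I j' hlt inf_le_right
        have hGen' := gen_step F I hMGen j'
        rw [hωT, Ioo_inter_Ioo, hsup] at hGen'
        exact ⟨_, Or.inr ⟨β, hβ, hGen', hAβ⟩, subset_rfl⟩
      · rcases le_or_gt q (F.a j'.succ) with hqa | hqa
        · -- the whole interval is inside branch j' : contradicts cut
          exfalso
          apply hcut
          refine ⟨j', ?_⟩
          rw [hωT]
          intro x hx
          exact ⟨le_of_lt (lt_trans hpa hx.1), le_of_lt (lt_of_lt_of_le hx.2 hqa)⟩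
        · -- right endpoint of the piece is the partition point
          have hinf : q ⊓ F.a j'.succ = F.a j'.succ := inf_eq_right.2 hqa.le
          rw [hinf] at hlt ⊢
          obtain ⟨β, hβ, hAβ⟩ :=
            right_anchored_image_good F I j' le_sup_right hlt
          have hGen' := gen_step F I hMGen j'
          rw [hωT, Ioo_inter_Ioo, hinf] at hGen'
          exact ⟨_, Or.inr ⟨β, hβ, hGen', hAβ⟩, subset_rfl⟩
  · -- M is a member of a good anchored class
    obtain ⟨c, s⟩ := α
    cases s with
    | false =>
      obtain ⟨t, htc, rfl⟩ := anch_false_elim hAnch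
      obtain ⟨ht0, hc1⟩ := member_bounds F I hI hIopen hconn htc hGen
      have hc0 : 0 < c := lt_of_le_of_lt ht0 htc
      obtain ⟨hj1, hj2⟩ := idx_spec_false F hc0 hc1
      rw [Ioo_inter_Ioo]
      rcases le_or_gt (c ⊓ F.a j'.succ) (t ⊔ F.a j'.castSucc) with hle | hlt
      · left
        rw [Ioo_eq_empty (not_lt.2 hle), image_empty]
      right
      rcases le_or_gt c (F.a j'.succ) with hca | hca
      · -- the anchor c lies in branch j'
        have hinf : c ⊓ F.a j'.succ = c := inf_eq_left.2 hca
        rw [hinf] at hlt ⊢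
        have hacs : F.a j'.castSucc < c := lt_of_le_of_lt le_sup_right hlt
        have hjj : j' = idx F (c, false) :=
          branch_Ioc_unique F ⟨hacs, hca⟩ ⟨hj1, hj2⟩
        by_cases hcut : CutCl F I (c, false)
        · -- the class is cut: absorb into the full piece V
          have hcut' : ∃ t', t' < F.a (idx F (c, false)).castSucc ∧
              Ioo t' c ∈ Gen F I := hcut
          obtain ⟨ts, hts, hGs⟩ := hcut'
          have hpieceV : Ioo ts c ∩
              Ioo (F.a (idx F (c, false)).castSucc) (F.a (idx F (c, false)).succ) =
              Ioo (F.a (idx F (c, false)).castSucc) c := by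
            rw [Ioo_inter_Ioo, sup_eq_right.2 hts.le, inf_eq_left.2 hj2]
          have hVGen := gen_step F I hGs (idx F (c, false))
          rw [hpieceV] at hVGen
          obtain ⟨β, hβ, hAβ⟩ := left_anchored_image_good F I (idx F (c, false)) hj1 hj2
          refine ⟨_, Or.inr ⟨β, hβ, hVGen, hAβ⟩, ?_⟩
          apply image_mono
          rw [hjj]
          exact Ioo_subset_Ioo le_sup_right le_rfl
        · -- uncut: the image is a member of the successor class
          have hanch' : Anch (c, false) (Ioo t c) := anch_false htc
          obtain ⟨u', v', huv', hG', hA', _, himg⟩ :=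
            uncut_member_step F I hI hIopen hconn htc hGen hanch' hcut
          refine ⟨Ioo u' v',
            Or.inr ⟨gstep F (c, false),
              GA_extend F I hGA ⟨_, hGen, hanch'⟩ hcut, hG', hA'⟩, ?_⟩
          rw [← himg, Ioo_inter_Ioo, inf_eq_left.2 hj2, hjj]
      · -- right endpoint of the piece is the partition point
        have hinf : c ⊓ F.a j'.succ = F.a j'.succ := inf_eq_right.2 hca.le
        rw [hinf] at hlt ⊢
        obtain ⟨β, hβ, hAβ⟩ :=
          right_anchored_image_good F I j' le_sup_right hlt
        have hGen' := gen_step F I hGen j'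
        rw [Ioo_inter_Ioo, hinf] at hGen'
        exact ⟨_, Or.inr ⟨β, hβ, hGen', hAβ⟩, subset_rfl⟩
    | true =>
      obtain ⟨t, htc, rfl⟩ := anch_true_elim hAnch
      obtain ⟨hc0, ht1⟩ := member_bounds F I hI hIopen hconn htc hGen
      have hc1 : c < 1 := lt_of_lt_of_le htc ht1
      obtain ⟨hj1, hj2⟩ := idx_spec_true F hc0 hc1
      rw [Ioo_inter_Ioo]
      rcases le_or_gt (t ⊓ F.a j'.succ) (c ⊔ F.a j'.castSucc) with hle | hlt
      · left
        rw [Ioo_eq_empty (not_lt.2 hle), image_empty]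
      right
      rcases le_or_gt (F.a j'.castSucc) c with hca | hca
      · -- the anchor c lies in branch j'
        have hsup : c ⊔ F.a j'.castSucc = c := sup_eq_left.2 hca
        rw [hsup] at hlt ⊢
        have hcs : c < F.a j'.succ := lt_of_lt_of_le hlt inf_le_right
        have hjj : j' = idx F (c, true) :=
          branch_Ico_unique F ⟨hca, hcs⟩ ⟨hj1, hj2⟩
        by_cases hcut : CutCl F I (c, true)
        · have hcut' : ∃ t', F.a (idx F (c, true)).succ < t' ∧
              Ioo c t' ∈ Gen F I := hcut
          obtain ⟨ts, hts, hGs⟩ := hcut'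
          have hpieceV : Ioo c ts ∩
              Ioo (F.a (idx F (c, true)).castSucc) (F.a (idx F (c, true)).succ) =
              Ioo c (F.a (idx F (c, true)).succ) := by
            rw [Ioo_inter_Ioo, sup_eq_left.2 hj1, inf_eq_right.2 hts.le]
          have hVGen := gen_step F I hGs (idx F (c, true))
          rw [hpieceV] at hVGen
          obtain ⟨β, hβ, hAβ⟩ := right_anchored_image_good F I (idx F (c, true)) hj1 hj2
          refine ⟨_, Or.inr ⟨β, hβ, hVGen, hAβ⟩, ?_⟩
          apply image_mono
          rw [hjj]
          exact Ioo_subset_Ioo le_rfl inf_le_right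
        · have hanch' : Anch (c, true) (Ioo c t) := anch_true htc
          obtain ⟨u', v', huv', hG', hA', _, himg⟩ :=
            uncut_member_step F I hI hIopen hconn htc hGen hanch' hcut
          refine ⟨Ioo u' v',
            Or.inr ⟨gstep F (c, true),
              GA_extend F I hGA ⟨_, hGen, hanch'⟩ hcut, hG', hA'⟩, ?_⟩
          rw [← himg, Ioo_inter_Ioo, sup_eq_left.2 hj1, hjj]
      · -- left endpoint of the piece is the partition point
        have hsup : c ⊔ F.a j'.castSucc = F.a j'.castSucc := sup_eq_right.2 hca.le
        rw [hsup] at hlt ⊢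
        obtain ⟨β, hβ, hAβ⟩ :=
          left_anchored_image_good F I j' hlt inf_le_right
        have hGen' := gen_step F I hGen j'
        rw [Ioo_inter_Ioo, hsup] at hGen'
        exact ⟨_, Or.inr ⟨β, hβ, hGen', hAβ⟩, subset_rfl⟩

end Stmt5Aux
namespace Stmt5Aux

open Set

variable {m : ℕ} (F : PWE m) (I : Set ℝ)

lemma master (hI : I ⊆ Icc 0 1) (hIopen : IsOpen I) (hconn : I.OrdConnected)
    {T : ℕ}
    (hT1 : ∀ k < T, (omegaSet F I k).Nonempty ∧
      ∃ j : Fin m, omegaSet F I k ⊆ Icc (F.a j.castSucc) (F.a j.succ))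
    (hT2 : omegaSet F I T = ∅ ∨
      ¬ ∃ j : Fin m, omegaSet F I T ⊆ Icc (F.a j.castSucc) (F.a j.succ)) :
    ∀ n, ∀ K ∈ GenN F I n, K = ∅ ∨ ∃ M, Good F I T M ∧ K ⊆ M := by
  intro n
  induction n with
  | zero =>
    intro K hK
    right
    exact ⟨I, Or.inl ⟨0, Nat.zero_le T, rfl⟩, (show K = I from hK) ▸ subset_rfl⟩
  | succ n ih =>
    rintro S ⟨K, hK, j', rfl⟩
    rcases ih K hK with rfl | ⟨M, hM, hKM⟩
    · left
      rw [empty_inter, image_empty]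
    · have hsub : F.toFun '' (K ∩ Ioo (F.a j'.castSucc) (F.a j'.succ)) ⊆
          F.toFun '' (M ∩ Ioo (F.a j'.castSucc) (F.a j'.succ)) :=
        image_mono (inter_subset_inter_left _ hKM)
      rcases good_closure F I hI hIopen hconn hT1 hT2 hM j' with hemp | ⟨M', hM', hsubM⟩
      · left
        exact eq_empty_of_subset_empty (hemp ▸ hsub)
      · right
        exact ⟨M', hM', hsub.trans hsubM⟩

/-- the union of an anchored class -/
def WCl (α : ℝ × Bool) : Set ℝ := ⋃₀ {K | K ∈ Gen F I ∧ Anch α K}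

lemma WCl_ordConnected (α : ℝ × Bool) : (WCl F I α).OrdConnected := by
  constructor
  rintro x ⟨K, ⟨hKG, hKA⟩, hxK⟩ y ⟨K', ⟨hKG', hKA'⟩, hyK⟩ z hz
  obtain ⟨c, s⟩ := α
  cases s with
  | false =>
    obtain ⟨t, ht, rfl⟩ := anch_false_elim hKA
    obtain ⟨t', ht', rfl⟩ := anch_false_elim hKA'
    exact ⟨Ioo t c, ⟨hKG, anch_false ht⟩,
      lt_of_lt_of_le hxK.1 hz.1, lt_of_le_of_lt hz.2 hyK.2⟩
  | true =>
    obtain ⟨t, ht, rfl⟩ := anch_true_elim hKA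
    obtain ⟨t', ht', rfl⟩ := anch_true_elim hKA'
    exact ⟨Ioo c t', ⟨hKG', anch_true ht'⟩,
      lt_of_lt_of_le hxK.1 hz.1, lt_of_le_of_lt hz.2 hyK.2⟩

lemma GA_finite (hI : I ⊆ Icc 0 1) (hIopen : IsOpen I) (hconn : I.OrdConnected) :
    (GA F I).Finite := by
  classical
  have hsub : GA F I ⊆ ⋃ ρ : Fin m × Bool,
      (fun k => (gstep F)^[k] (baseA F ρ)) ''
        Iic (Nat.find (exists_term F I hI hIopen hconn (baseA F ρ))) := by
    rintro β ⟨ρ, k, rfl, hpre⟩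
    refine mem_iUnion.2 ⟨ρ, mem_image_of_mem _ ?_⟩
    simp only [mem_Iic]
    by_contra hgt
    push_neg at hgt
    have hspec := Nat.find_spec (exists_term F I hI hIopen hconn (baseA F ρ))
    have := hpre _ hgt
    tauto
  exact Finite.subset (finite_iUnion fun ρ => (finite_Iic _).image _) hsub

lemma omegaInf_sUnion (hI : I ⊆ Icc 0 1) (hIopen : IsOpen I) (hconn : I.OrdConnected) :
    ∃ 𝔅 : Set (Set ℝ), 𝔅.Finite ∧ (∀ S ∈ 𝔅, S.OrdConnected) ∧
      OmegaInf F I = ⋃₀ 𝔅 := by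
  classical
  have hwit := exists_TIwit F I hI hIopen hconn
  set T := Nat.find hwit with hTdef
  have hT2 := Nat.find_spec hwit
  have hT1 : ∀ k < T, (omegaSet F I k).Nonempty ∧
      ∃ j : Fin m, omegaSet F I k ⊆ Icc (F.a j.castSucc) (F.a j.succ) := by
    intro k hk
    have hmin := Nat.find_min hwit hk
    push_neg at hmin
    exact ⟨hmin.1, hmin.2⟩
  refine ⟨((fun k => omegaSet F I k) '' Iic T) ∪ (WCl F I '' GA F I), ?_, ?_, ?_⟩
  · exact (Set.Finite.image _ (finite_Iic T)).union
      ((GA_finite F I hI hIopen hconn).image _)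
  · rintro S (⟨k, hk, rfl⟩ | ⟨α, hα, rfl⟩)
    · obtain ⟨p, q, _, _, _, hshape⟩ := genN_shape F I hI hIopen hconn k _
        (omega_chain F I hI hIopen hconn hT1 k hk)
      show (omegaSet F I k).OrdConnected
      rw [hshape]
      exact ordConnected_Ioo
    · exact WCl_ordConnected F I α
  · apply Subset.antisymm
    · intro x hx
      obtain ⟨n, hn⟩ := mem_iUnion.1 hx
      rw [omega_eq F I hI hIopen hconn n] at hn
      obtain ⟨K, hK, hxK⟩ := hn
      rcases master F I hI hIopen hconn hT1 hT2 n K hK with rfl | ⟨M, hM, hKM⟩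
      · exact absurd hxK (notMem_empty x)
      rcases hM with ⟨k, hk, rfl⟩ | ⟨α, hαGA, hGen, hAnch⟩
      · exact ⟨omegaSet F I k, Or.inl ⟨k, hk, rfl⟩, hKM hxK⟩
      · exact ⟨WCl F I α, Or.inr ⟨α, hαGA, rfl⟩,
          ⟨M, ⟨hGen, hAnch⟩, hKM hxK⟩⟩
    · rintro x ⟨S, hS, hxS⟩
      rcases hS with ⟨k, _, rfl⟩ | ⟨α, _, rfl⟩
      · exact mem_iUnion.2 ⟨k, hxS⟩
      · obtain ⟨K, ⟨hKG, _⟩, hxK⟩ := hxS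
        obtain ⟨n, hn⟩ := mem_iUnion.1 hKG
        refine mem_iUnion.2 ⟨n, ?_⟩
        rw [omega_eq F I hI hIopen hconn n]
        exact ⟨K, hn, hxK⟩

end Stmt5Aux
/-- `Ω(I)` is a finite union of intervals. -/
theorem stmt5 {m : ℕ} (F : PWE m) (I : Set ℝ)
    (hI : I ⊆ Icc 0 1) (hIopen : IsOpen I) (hconn : I.OrdConnected) :
    ∃ n : ℕ, ∃ J : Fin n → Set ℝ, (∀ i, (J i).OrdConnected) ∧
      OmegaInf F I = ⋃ i, J i := by
  classical
  obtain ⟨𝔅, hfin, hOC, hEq⟩ := Stmt5Aux.omegaInf_sUnion F I hI hIopen hconn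
  refine ⟨hfin.toFinset.card, fun i => ((hfin.toFinset.equivFin.symm i : Set ℝ)), ?_, ?_⟩
  · intro i
    exact hOC _ (hfin.mem_toFinset.1 (hfin.toFinset.equivFin.symm i).2)
  · rw [hEq]
    ext x
    simp only [Set.mem_sUnion, Set.mem_iUnion]
    constructor
    · rintro ⟨S, hS, hxS⟩
      refine ⟨hfin.toFinset.equivFin ⟨S, hfin.mem_toFinset.2 hS⟩, ?_⟩
      simpa using hxS
    · rintro ⟨i, hx⟩
      exact ⟨_, hfin.mem_toFinset.1 (hfin.toFinset.equivFin.symm i).2, hx⟩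
end
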